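/- arXiv:2105.13707 — 6 statements merged into one kernel-verified Lean document; each statement's English description precedes it below -/
import Mathlib

section
/- Let f be a fractional matching of a graph G achieving the fractional matching number with f(e) ∈ {0, 1/2, 1} for all edges, chosen with the greatest number of edges assigned value 1. Then the set of vertices v with f(v) = 0 (where f(v) denotes the sum of f over edges incident to v) is an independent set of G. -/
open Finset
open scoped Classical

noncomputable section

/-- A fractional matching of a simple graph `G`: a weight on `Sym2 V` supported on the
edge set, with values in `[0,1]`, such that the total weight at each vertex is at most 1. -/
def SimpleGraph.IsFracMatching {V : Type*} [Fintype V] (G : SimpleGraph V)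
    (f : Sym2 V → ℝ) : Prop :=
  (∀ e, 0 ≤ f e ∧ f e ≤ 1) ∧ (∀ e, e ∉ G.edgeSet → f e = 0) ∧
    ∀ v : V, ∑ e ∈ G.incidenceFinset v, f e ≤ 1

/-- The total weight `f(G)` of a fractional matching. -/
def SimpleGraph.fracWeight {V : Type*} [Fintype V] (G : SimpleGraph V)
    (f : Sym2 V → ℝ) : ℝ :=
  ∑ e ∈ G.edgeFinset, f e

/-- The weight `f(v)` of a vertex: the sum over edges incident to `v`. -/
def SimpleGraph.vertexWeight {V : Type*} [Fintype V] (G : SimpleGraph V)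
    (f : Sym2 V → ℝ) (v : V) : ℝ :=
  ∑ e ∈ G.incidenceFinset v, f e

/-- The fractional matching number `α'(G)`. -/
def SimpleGraph.fracNu {V : Type*} [Fintype V] (G : SimpleGraph V) : ℝ :=
  sSup {x : ℝ | ∃ f, G.IsFracMatching f ∧ G.fracWeight f = x}

end

theorem stmt_1 {V : Type*} [Fintype V] (G : SimpleGraph V) (f : Sym2 V → ℝ)
    (hf : G.IsFracMatching f) (hopt : G.fracWeight f = G.fracNu)
    (hval : ∀ e ∈ G.edgeSet, f e = 0 ∨ f e = 1/2 ∨ f e = 1)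
    (hmax : ∀ g : Sym2 V → ℝ, G.IsFracMatching g → G.fracWeight g = G.fracNu →
      (∀ e ∈ G.edgeSet, g e = 0 ∨ g e = 1/2 ∨ g e = 1) →
      (G.edgeFinset.filter (fun e => g e = 1)).card ≤
        (G.edgeFinset.filter (fun e => f e = 1)).card) :
    ∀ u v : V, G.vertexWeight f u = 0 → G.vertexWeight f v = 0 → ¬ G.Adj u v := by
  intro u v hu hv hadj
  obtain ⟨h01, hsupp, hdeg⟩ := hf
  set e0 : Sym2 V := s(u, v) with he0
  have he0mem : e0 ∈ G.edgeSet := hadj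
  -- every edge incident to u or v has weight 0
  have hzero : ∀ w : V, G.vertexWeight f w = 0 → ∀ e ∈ G.incidenceFinset w, f e = 0 := by
    intro w hw e he
    have := (Finset.sum_eq_zero_iff_of_nonneg (fun e _ => (h01 e).1)).mp hw
    exact this e he
  have he0u : e0 ∈ G.incidenceFinset u := by
    rw [SimpleGraph.mem_incidenceFinset]
    exact ⟨he0mem, Sym2.mem_mk_left u v⟩
  have hfe0 : f e0 = 0 := hzero u hu e0 he0u
  set g : Sym2 V → ℝ := fun e => if e = e0 then 1 else f e with hg
  have hgmatch : G.IsFracMatching g := by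
    refine ⟨fun e => ?_, fun e he => ?_, fun w => ?_⟩
    · by_cases h : e = e0 <;> simp [hg, h, (h01 e).1, (h01 e).2]
    · have : e ≠ e0 := fun h => he (h ▸ he0mem)
      simp [hg, this, hsupp e he]
    · by_cases hw : e0 ∈ G.incidenceFinset w
      · have hwuv : w = u ∨ w = v := by
          have := ((G.mem_incidenceFinset w e0).mp hw).2
          simpa [he0, Sym2.mem_iff] using this
        have hwz : ∀ e ∈ G.incidenceFinset w, f e = 0 := by
          rcases hwuv with rfl | rfl
          · exact hzero w hu
          · exact hzero w hv
        have : ∑ e ∈ G.incidenceFinset w, g e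
            = ∑ e ∈ G.incidenceFinset w, (if e = e0 then (1:ℝ) else 0) := by
          apply Finset.sum_congr rfl
          intro e he
          by_cases h : e = e0 <;> simp [hg, h, hwz e he]
        rw [this, Finset.sum_ite_eq' _ e0]
        simp [hw]
      · have : ∑ e ∈ G.incidenceFinset w, g e = ∑ e ∈ G.incidenceFinset w, f e := by
          apply Finset.sum_congr rfl
          intro e he
          have : e ≠ e0 := fun h => hw (h ▸ he)
          simp [hg, this]
        rw [this]; exact hdeg w
  have he0fin : e0 ∈ G.edgeFinset := by rwa [SimpleGraph.mem_edgeFinset]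
  have hwt : G.fracWeight g = G.fracWeight f + 1 := by
    unfold SimpleGraph.fracWeight
    rw [← Finset.sum_erase_add _ f he0fin, ← Finset.sum_erase_add _ g he0fin]
    have : ∑ e ∈ G.edgeFinset.erase e0, g e = ∑ e ∈ G.edgeFinset.erase e0, f e := by
      apply Finset.sum_congr rfl
      intro e he
      have : e ≠ e0 := Finset.ne_of_mem_erase he
      simp [hg, this]
    rw [this]
    simp [hg, hfe0]
  -- boundedness of the weight set
  have hbdd : BddAbove {x : ℝ | ∃ f, G.IsFracMatching f ∧ G.fracWeight f = x} := by
    refine ⟨(G.edgeFinset.card : ℝ), ?_⟩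
    rintro x ⟨h, ⟨hh01, _, _⟩, rfl⟩
    calc ∑ e ∈ G.edgeFinset, h e ≤ ∑ _e ∈ G.edgeFinset, (1:ℝ) :=
          Finset.sum_le_sum fun e _ => (hh01 e).2
      _ = G.edgeFinset.card := by simp
  have hle : G.fracWeight g ≤ G.fracNu :=
    le_csSup hbdd ⟨g, hgmatch, rfl⟩
  rw [hwt, hopt] at hle
  linarith
end

section
/- For any graph G there is a partition V(G) = V₁ ∪ V₂ such that |V₁| = 2α'(G), the induced subgraph G[V₁] has a fractional perfect matching, and V₂ is empty or an independent set of G. -/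
open Finset
open scoped Classical

/-!
Take a maximum fractional matching `g` in which every vertex has weight `0` or `1`, and let `V₁`
be its set of saturated vertices. Double counting gives `|V₁| = 2 α'(G)`; no weight leaves `V₁`, so
`g` restricted to `G[V₁]` is perfect; and an edge between two vertices of weight `< 1` could carry
more weight, so `V ∖ V₁` is independent.

Such a `g` exists because any fractional matching `f` with a fractional vertex `u` (weight strictly
between `0` and `1`) can be moved, without losing weight, to one with smaller support or fewer
fractional vertices. The direction of the move is the `±1` alternating sum along a walk that leaves
`u` and continues through saturated vertices on edges of weight in `(0, 1)` until it meets another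
fractional vertex or closes a cycle; in either case only fractional vertices see their weight
change.
Integral matchings have weight `|V₁| / 2`, so finitely many values occur and a maximum exists.
-/

lemma exists_max_feasible_step {ι : Type*} [Fintype ι] (a b : ι → ℝ) (ha : ∀ i, 0 ≤ a i)
    (hab : ∀ i, b i < 0 → 0 < a i) (hb : ∃ i, b i < 0) :
    ∃ t, 0 < t ∧ (∀ i, 0 ≤ a i + t * b i) ∧ ∃ i, b i < 0 ∧ a i + t * b i = 0 := by
  obtain ⟨i, hi, hmin⟩ := exists_min_image {i | b i < 0} (fun i => a i / -b i)
    (by simpa [Finset.Nonempty] using hb)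
  simp only [mem_filter, mem_univ, true_and] at hi hmin
  have hbi : 0 < -b i := neg_pos.mpr hi
  refine ⟨a i / -b i, div_pos (hab i hi) hbi, fun j => ?_, i, hi, by field_simp [hi.ne]; ring⟩
  rcases lt_or_ge (b j) 0 with hj | hj
  · have := (le_div_iff₀ (neg_pos.mpr hj)).mp (hmin j hj)
    linarith
  · exact add_nonneg (ha j) (mul_nonneg (div_pos (hab i hi) hbi).le hj)

namespace SimpleGraph

variable {V : Type*} {f : Sym2 V → ℝ}

section FractionalMatching

variable [Fintype V] {G : SimpleGraph V}

lemma vertexWeight_add (f g : Sym2 V → ℝ) (v : V) :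
    G.vertexWeight (f + g) v = G.vertexWeight f v + G.vertexWeight g v :=
  sum_add_distrib

lemma vertexWeight_sub (f g : Sym2 V → ℝ) (v : V) :
    G.vertexWeight (f - g) v = G.vertexWeight f v - G.vertexWeight g v :=
  sum_sub_distrib ..

lemma vertexWeight_smul (c : ℝ) (f : Sym2 V → ℝ) (v : V) :
    G.vertexWeight (c • f) v = c * G.vertexWeight f v :=
  (mul_sum ..).symm

lemma vertexWeight_neg (f : Sym2 V → ℝ) (v : V) :
    G.vertexWeight (-f) v = -G.vertexWeight f v :=
  sum_neg_distrib ..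

lemma vertexWeight_single {e : Sym2 V} (he : e ∈ G.edgeSet) (c : ℝ) (v : V) :
    G.vertexWeight (Pi.single e c) v = if v ∈ e then c else 0 := by
  simp [vertexWeight, Pi.single_apply, incidenceSet, he]

lemma fracWeight_add (f g : Sym2 V → ℝ) :
    G.fracWeight (f + g) = G.fracWeight f + G.fracWeight g :=
  sum_add_distrib

lemma fracWeight_smul (c : ℝ) (f : Sym2 V → ℝ) : G.fracWeight (c • f) = c * G.fracWeight f :=
  (mul_sum ..).symm

lemma fracWeight_neg (f : Sym2 V → ℝ) : G.fracWeight (-f) = -G.fracWeight f :=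
  sum_neg_distrib ..

lemma fracWeight_single {e : Sym2 V} (he : e ∈ G.edgeSet) (c : ℝ) :
    G.fracWeight (Pi.single e c) = c := by
  simp [fracWeight, Pi.single_apply, he]

lemma vertexWeight_eq_sum_neighborFinset (f : Sym2 V → ℝ) (v : V) :
    G.vertexWeight f v = ∑ w ∈ G.neighborFinset v, f s(v, w) := by
  have : G.incidenceFinset v = (G.neighborFinset v).image (s(v, ·)) := by
    ext e
    induction e using Sym2.ind with
    | h a b =>
      simp only [mem_incidenceFinset, mk'_mem_incidenceSet_iff, mem_image, mem_neighborFinset]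
      constructor
      · rintro ⟨h, rfl | rfl⟩
        exacts [⟨b, h, rfl⟩, ⟨a, h.symm, Sym2.eq_swap⟩]
      · rintro ⟨c, h, he⟩
        rcases Sym2.eq_iff.mp he with ⟨rfl, rfl⟩ | ⟨rfl, rfl⟩
        exacts [⟨h, .inl rfl⟩, ⟨h.symm, .inr rfl⟩]
  rw [vertexWeight, this, sum_image]
  intro a _ b _ h
  exact Sym2.congr_right.mp h

theorem sum_vertexWeight (f : Sym2 V → ℝ) :
    ∑ v, G.vertexWeight f v = 2 * G.fracWeight f := by
  rw [fracWeight, mul_sum]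
  unfold vertexWeight
  rw [sum_comm' (t' := G.edgeFinset) (s' := fun e => e.toFinset)]
  · refine sum_congr rfl fun e he => ?_
    rw [sum_const, Sym2.card_toFinset_of_not_isDiag e (G.not_isDiag_of_mem_edgeFinset he)]
    simp [mul_comm]
  · intro v e
    simp [incidenceSet, and_comm]

lemma le_vertexWeight (hf : ∀ e, 0 ≤ f e) {v : V} {e : Sym2 V}
    (he : e ∈ G.edgeSet) (hv : v ∈ e) : f e ≤ G.vertexWeight f v :=
  single_le_sum (fun e _ => hf e) (by simp [incidenceSet, he, hv])

namespace IsFracMatching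

lemma nonneg (hf : G.IsFracMatching f) (e : Sym2 V) : 0 ≤ f e := (hf.1 e).1

lemma vertexWeight_le_one (hf : G.IsFracMatching f) (v : V) : G.vertexWeight f v ≤ 1 :=
  hf.2.2 v

lemma mem_edgeSet (hf : G.IsFracMatching f) {e : Sym2 V} (he : f e ≠ 0) : e ∈ G.edgeSet :=
  not_imp_comm.mp (hf.2.1 e) he

lemma adj (hf : G.IsFracMatching f) {a b : V} (h : f s(a, b) ≠ 0) : G.Adj a b :=
  hf.mem_edgeSet h

lemma vertexWeight_nonneg (hf : G.IsFracMatching f) (v : V) : 0 ≤ G.vertexWeight f v :=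
  sum_nonneg fun e _ => hf.nonneg e

end IsFracMatching

lemma isFracMatching_of_nonneg (h0 : ∀ e, 0 ≤ f e) (hE : ∀ e ∉ G.edgeSet, f e = 0)
    (h1 : ∀ v, G.vertexWeight f v ≤ 1) : G.IsFracMatching f := by
  refine ⟨fun e => ⟨h0 e, ?_⟩, hE, h1⟩
  by_cases he : e ∈ G.edgeSet
  · induction e using Sym2.ind with
    | h a b => exact (le_vertexWeight h0 he (Sym2.mem_mk_left a b)).trans (h1 a)
  · simp [hE e he]

lemma isFracMatching_zero : G.IsFracMatching 0 :=
  isFracMatching_of_nonneg (fun _ => le_rfl) (fun _ _ => rfl) fun _ => by simp [vertexWeight]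

theorem IsFracMatching.not_adj_of_vertexWeight_lt_one (hf : G.IsFracMatching f)
    (hmax : ∀ g, G.IsFracMatching g → G.fracWeight g ≤ G.fracWeight f) {u v : V}
    (hu : G.vertexWeight f u < 1) (hv : G.vertexWeight f v < 1) : ¬G.Adj u v := by
  intro huv
  set t := min (1 - G.vertexWeight f u) (1 - G.vertexWeight f v)
  have ht : 0 < t := lt_min (by linarith) (by linarith)
  have hg : G.IsFracMatching (f + Pi.single s(u, v) t) := by
    refine isFracMatching_of_nonneg (fun e => ?_) (fun e he => ?_) (fun z => ?_)
    · simp only [Pi.add_apply, Pi.single_apply]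
      split_ifs <;> linarith [hf.nonneg e]
    · have : e ≠ s(u, v) := by rintro rfl; exact he huv
      simp [this, hf.2.1 e he]
    · rw [vertexWeight_add, vertexWeight_single huv]
      split_ifs with hz
      · rcases Sym2.mem_iff.mp hz with rfl | rfl
        · linarith [min_le_left (1 - G.vertexWeight f z) (1 - G.vertexWeight f v)]
        · linarith [min_le_right (1 - G.vertexWeight f u) (1 - G.vertexWeight f z)]
      · linarith [hf.vertexWeight_le_one z]
  have := hmax _ hg
  rw [fracWeight_add, fracWeight_single huv] at this
  linarith

lemma two_mul_fracWeight_eq_card (hint : ∀ v, G.vertexWeight f v = 0 ∨ G.vertexWeight f v = 1) :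
    2 * G.fracWeight f = #{v | G.vertexWeight f v = 1} := by
  rw [← sum_vertexWeight, ← sum_boole]
  refine sum_congr rfl fun v _ => ?_
  rcases hint v with h | h <;> simp [h]

theorem IsFracMatching.exists_isFracMatching_induce (hf : G.IsFracMatching f) (s : Finset V)
    (hs : ∀ v ∈ s, G.vertexWeight f v = 1) (hout : ∀ v ∉ s, G.vertexWeight f v = 0) :
    ∃ g, (G.induce (s : Set V)).IsFracMatching g ∧
      (G.induce (s : Set V)).fracWeight g = #s / 2 := by
  set H := G.induce (s : Set V)
  have hH (a : (s : Set V)) : H.vertexWeight (fun e => f (e.map Subtype.val)) a = 1 := by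
    rw [← hs a a.2, vertexWeight_eq_sum_neighborFinset, vertexWeight_eq_sum_neighborFinset,
      ← sum_filter_of_ne (p := (· ∈ s)) fun w hw h0 => ?_]
    · have : (H.neighborFinset a).map (.subtype _) = {w ∈ G.neighborFinset a | w ∈ s} := by
        ext w
        simp [H]
      rw [← this, sum_map]
      rfl
    · by_contra hws
      exact h0 (le_antisymm (hout w hws ▸ le_vertexWeight hf.nonneg (by simpa using hw)
        (Sym2.mem_mk_right _ _)) (hf.nonneg _))
  refine ⟨fun e => f (e.map Subtype.val), isFracMatching_of_nonneg (fun e => hf.nonneg _)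
    (fun e he => ?_) (fun a => (hH a).le), ?_⟩
  · induction e using Sym2.ind with
    | h a b => exact hf.2.1 _ he
  · have := sum_vertexWeight (G := H) (fun e => f (e.map Subtype.val))
    simp only [hH, sum_const, card_univ, nsmul_eq_mul, mul_one] at this
    rw [eq_div_iff two_ne_zero, mul_comm, ← this]
    simp

noncomputable def fractionalVertices (G : SimpleGraph V) (f : Sym2 V → ℝ) : Finset V :=
  {v | 0 < G.vertexWeight f v ∧ G.vertexWeight f v < 1}

lemma mem_fractionalVertices {v : V} :
    v ∈ G.fractionalVertices f ↔ 0 < G.vertexWeight f v ∧ G.vertexWeight f v < 1 := by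
  simp [fractionalVertices]

structure IsAdmissibleDirection (G : SimpleGraph V) (f δ : Sym2 V → ℝ) : Prop where
  ne_zero : δ ≠ 0
  support_subset : Function.support δ ⊆ Function.support f
  mem_fractionalVertices : ∀ v, G.vertexWeight δ v ≠ 0 → v ∈ G.fractionalVertices f

lemma IsAdmissibleDirection.neg {δ : Sym2 V → ℝ} (h : G.IsAdmissibleDirection f δ) :
    G.IsAdmissibleDirection f (-δ) where
  ne_zero := neg_ne_zero.mpr h.ne_zero
  support_subset := by simpa using h.support_subset
  mem_fractionalVertices v hv := h.mem_fractionalVertices v (by simpa [vertexWeight_neg] using hv)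

lemma exists_neg_or_vertexWeight_pos {δ : Sym2 V → ℝ} (hE : ∀ e, δ e ≠ 0 → e ∈ G.edgeSet)
    (hδ : δ ≠ 0) : (∃ e, δ e < 0) ∨ ∃ v, 0 < G.vertexWeight δ v := by
  by_contra! h
  obtain ⟨e, he⟩ := Function.ne_iff.mp hδ
  induction e using Sym2.ind with
  | h a b =>
    have := le_vertexWeight h.1 (hE _ he) (Sym2.mem_mk_left a b)
    exact he (le_antisymm (this.trans (h.2 a)) (h.1 _))

theorem IsFracMatching.exists_step (hf : G.IsFracMatching f) {δ : Sym2 V → ℝ}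
    (hδ : G.IsAdmissibleDirection f δ) :
    ∃ t, 0 < t ∧ G.IsFracMatching (f + t • δ) ∧ ((∃ e, f e ≠ 0 ∧ f e + t * δ e = 0) ∨
      ∃ v ∈ G.fractionalVertices f, v ∉ G.fractionalVertices (f + t • δ)) := by
  have hfrac v (hv : G.vertexWeight δ v ≠ 0) :=
    mem_fractionalVertices.mp (hδ.mem_fractionalVertices v hv)
  -- the constraints `0 ≤ f e`, `vertexWeight f v ≤ 1`, `0 ≤ vertexWeight f v` along `f + t • δ`
  obtain ⟨t, ht, hfeas, i, hi, htight⟩ := exists_max_feasible_step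
    (Sum.elim f (Sum.elim (fun v => 1 - G.vertexWeight f v) (G.vertexWeight f)))
    (Sum.elim δ (Sum.elim (fun v => -G.vertexWeight δ v) (G.vertexWeight δ)))
    (by rintro (e | v | v) <;> simp [hf.nonneg, hf.vertexWeight_le_one, hf.vertexWeight_nonneg])
    (by
      rintro (e | v | v) h <;> simp only [Sum.elim_inl, Sum.elim_inr, sub_pos] at h ⊢
      · exact (hf.nonneg e).lt_of_ne (hδ.support_subset h.ne).symm
      · exact (hfrac v (by linarith)).2
      · exact (hfrac v h.ne).1)
    (by
      rcases exists_neg_or_vertexWeight_pos (fun e he => hf.mem_edgeSet (hδ.support_subset he))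
        hδ.ne_zero with ⟨e, he⟩ | ⟨v, hv⟩
      exacts [⟨.inl e, he⟩, ⟨.inr (.inl v), by simpa⟩])
  have hgv v : G.vertexWeight (f + t • δ) v = G.vertexWeight f v + t * G.vertexWeight δ v := by
    rw [vertexWeight_add, vertexWeight_smul]
  refine ⟨t, ht, isFracMatching_of_nonneg (fun e => by simpa using hfeas (.inl e))
    (fun e he => ?_) (fun v => ?_), ?_⟩
  · have hδe : δ e = 0 := by_contra fun h => he (hf.mem_edgeSet (hδ.support_subset h))
    simp [hf.2.1 e he, hδe]
  · have := hfeas (.inr (.inl v))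
    simp only [Sum.elim_inr, Sum.elim_inl] at this
    rw [hgv]
    linarith
  · rcases i with e | v | v <;> simp only [Sum.elim_inl, Sum.elim_inr] at hi htight
    · exact .inl ⟨e, hδ.support_subset hi.ne, htight⟩
    · refine .inr ⟨v, hδ.mem_fractionalVertices v (by linarith), ?_⟩
      rw [mem_fractionalVertices, hgv]
      exact fun h => by linarith [h.2]
    · refine .inr ⟨v, hδ.mem_fractionalVertices v hi.ne, ?_⟩
      rw [mem_fractionalVertices, hgv]
      exact fun h => by linarith [h.1]

theorem IsFracMatching.exists_improvement (hf : G.IsFracMatching f) {δ : Sym2 V → ℝ}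
    (hδ : G.IsAdmissibleDirection f δ) :
    ∃ g, G.IsFracMatching g ∧ G.fracWeight f ≤ G.fracWeight g ∧
      #{e | g e ≠ 0} + #(G.fractionalVertices g) < #{e | f e ≠ 0} + #(G.fractionalVertices f) := by
  wlog hw : 0 ≤ G.fracWeight δ generalizing δ
  · exact this hδ.neg (by rw [fracWeight_neg]; linarith)
  obtain ⟨t, ht, hg, htight⟩ := hf.exists_step hδ
  have hsupp : ({e | (f + t • δ) e ≠ 0} : Finset (Sym2 V)) ⊆ ({e | f e ≠ 0} : Finset _) := by
    intro e he
    simp only [mem_filter, mem_univ, true_and] at he ⊢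
    contrapose! he
    have hδe : δ e = 0 := Function.notMem_support.mp fun h => hδ.support_subset h he
    simp [he, hδe]
  have hfr : G.fractionalVertices (f + t • δ) ⊆ G.fractionalVertices f := by
    intro v hv
    by_cases h : G.vertexWeight δ v = 0
    · simpa [mem_fractionalVertices, vertexWeight_add, vertexWeight_smul, h] using hv
    · exact hδ.mem_fractionalVertices v h
  refine ⟨f + t • δ, hg, by rw [fracWeight_add, fracWeight_smul]; nlinarith, ?_⟩
  have := card_le_card hsupp
  have := card_le_card hfr
  rcases htight with ⟨e, hfe, he⟩ | ⟨v, hv, hv'⟩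
  · have := card_lt_card <|
      (ssubset_iff_of_subset hsupp).mpr ⟨e, by simpa using hfe, by simpa using he⟩
    omega
  · have := card_lt_card <| (ssubset_iff_of_subset hfr).mpr ⟨v, hv, hv'⟩
    omega

end FractionalMatching

section AlternatingEdgeSum

noncomputable def alternatingEdgeSum : List V → Sym2 V → ℝ
  | a :: b :: l => Pi.single s(a, b) 1 - alternatingEdgeSum (b :: l)
  | _ => 0

lemma exists_rel_of_alternatingEdgeSum_ne_zero {R : V → V → Prop} :
    ∀ {l : List V}, l.IsChain R → ∀ {e : Sym2 V}, alternatingEdgeSum l e ≠ 0 →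
      ∃ a ∈ l, ∃ b ∈ l, R a b ∧ e = s(a, b)
  | a :: b :: l, hl, e, he => by
    rw [List.isChain_cons_cons] at hl
    by_cases hab : e = s(a, b)
    · exact ⟨a, by simp, b, by simp, hl.1, hab⟩
    · obtain ⟨c, hc, d, hd, hcd, rfl⟩ := exists_rel_of_alternatingEdgeSum_ne_zero hl.2
        (e := e) (by simpa [alternatingEdgeSum, Pi.single_apply, hab] using he)
      exact ⟨c, List.mem_cons_of_mem a hc, d, List.mem_cons_of_mem a hd, hcd, rfl⟩
  | [], _, _, he | [_], _, _, he => absurd rfl he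

lemma alternatingEdgeSum_eq_zero_of_notMem {l : List V} {x : V} (hx : x ∉ l) (y : V) :
    alternatingEdgeSum l s(x, y) = 0 := by
  by_contra h
  obtain ⟨a, ha, b, hb, -, hab⟩ := exists_rel_of_alternatingEdgeSum_ne_zero (R := fun _ _ => True)
    (List.isChain_iff_forall_rel_of_append_cons_cons.mpr fun _ _ _ _ _ => trivial) h
  rcases Sym2.mem_iff.mp (hab ▸ Sym2.mem_mk_left x y) with rfl | rfl <;> contradiction

lemma alternatingEdgeSum_cons_apply_eq_zero {x y : V} {r : List V} (hnd : (x :: r).Nodup)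
    (hy : r.head? ≠ some y) : alternatingEdgeSum (x :: r) s(x, y) = 0 := by
  cases r with
  | nil => rfl
  | cons z r =>
    have hzy : y ≠ z := fun h => hy (by simp [h])
    have hx : x ∉ z :: r := (List.nodup_cons.mp hnd).1
    have hxz : x ≠ z := fun h => hx (h ▸ List.mem_cons_self ..)
    simp [alternatingEdgeSum, alternatingEdgeSum_eq_zero_of_notMem hx, hzy, hxz]

lemma alternatingEdgeSum_cons_cons_apply_self {x y : V} {r : List V} (hnd : (x :: r).Nodup)
    (hy : r.head? ≠ some y) : alternatingEdgeSum (y :: x :: r) s(y, x) = 1 := by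
  simp [alternatingEdgeSum, Sym2.eq_swap (a := y), alternatingEdgeSum_cons_apply_eq_zero hnd hy]

lemma support_alternatingEdgeSum_subset {l : List V}
    (hl : l.IsChain fun a b => f s(a, b) ∈ Set.Ioo 0 1) :
    Function.support (alternatingEdgeSum l) ⊆ Function.support f := fun e he => by
  obtain ⟨a, -, b, -, hab, rfl⟩ := exists_rel_of_alternatingEdgeSum_ne_zero hl he
  exact hab.1.ne'

end AlternatingEdgeSum

section AlternatingWalk

variable [Fintype V] {G : SimpleGraph V} {u : V}

lemma vertexWeight_alternatingEdgeSum {a : V} {l : List V} (hl : (a :: l).IsChain G.Adj) (z : V) :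
    G.vertexWeight (alternatingEdgeSum (a :: l)) z =
      (if z = a then 1 else 0) - (-1) ^ l.length * if z = l.getLastD a then 1 else 0 := by
  induction l generalizing a with
  | nil => simp [alternatingEdgeSum, vertexWeight]
  | cons b l ih =>
    rw [List.isChain_cons_cons] at hl
    rw [alternatingEdgeSum, vertexWeight_sub, vertexWeight_single hl.1, ih hl.2, List.getLastD_cons,
      List.length_cons, pow_succ]
    have := G.ne_of_adj hl.1
    simp only [Sym2.mem_iff]
    split_ifs <;> simp_all

lemma IsFracMatching.exists_mem_Ioo_of_mem_fractionalVertices (hf : G.IsFracMatching f) {x : V}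
    (hx : x ∈ G.fractionalVertices f) : ∃ y, f s(x, y) ∈ Set.Ioo 0 1 := by
  rw [mem_fractionalVertices, vertexWeight_eq_sum_neighborFinset] at hx
  obtain ⟨y, hy, hpos⟩ := exists_lt_of_sum_lt (f := fun _ => (0 : ℝ)) (by simpa using hx.1)
  exact ⟨y, hpos, (single_le_sum (fun w _ => hf.nonneg s(x, w)) hy).trans_lt hx.2⟩

lemma IsFracMatching.exists_ne_mem_Ioo (hf : G.IsFracMatching f) {x z : V}
    (hx : G.vertexWeight f x = 1) (hz : f s(x, z) ∈ Set.Ioo 0 1) :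
    ∃ y ≠ z, f s(x, y) ∈ Set.Ioo 0 1 := by
  have hzN : z ∈ G.neighborFinset x := by simpa using hf.adj hz.1.ne'
  rw [vertexWeight_eq_sum_neighborFinset, ← add_sum_erase _ _ hzN] at hx
  obtain ⟨y, hy, hpos⟩ := exists_lt_of_sum_lt (f := fun _ => (0 : ℝ))
    (by simp only [sum_const_zero]; linarith [hz.2])
  refine ⟨y, ne_of_mem_erase hy, hpos, ?_⟩
  linarith [single_le_sum (fun w _ => hf.nonneg s(x, w)) hy, hz.1]

lemma IsFracMatching.isAdmissibleDirection_alternatingEdgeSum_of_notMem (hf : G.IsFracMatching f)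
    (hu : u ∈ G.fractionalVertices f) {x y : V} {r : List V} (hnd : (x :: r).Nodup)
    (hW : (y :: x :: r).IsChain fun a b => f s(a, b) ∈ Set.Ioo 0 1) (hlast : r.getLastD x = u)
    (hy : y ∉ x :: r) (hyf : y ∈ G.fractionalVertices f) :
    G.IsAdmissibleDirection f (alternatingEdgeSum (y :: x :: r)) where
  ne_zero h := by
    have hyr : r.head? ≠ some y := fun h => hy (.tail x (List.mem_of_mem_head? h))
    simpa [alternatingEdgeSum_cons_cons_apply_self hnd hyr] using congrFun h s(y, x)
  support_subset := support_alternatingEdgeSum_subset hW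
  mem_fractionalVertices v hv := by
    rw [vertexWeight_alternatingEdgeSum (hW.imp fun a b h => hf.adj h.1.ne'), List.getLastD_cons,
      hlast] at hv
    by_cases hvy : v = y
    · exact hvy ▸ hyf
    · by_cases hvu : v = u
      · exact hvu ▸ hu
      · simp [hvy, hvu] at hv

lemma IsFracMatching.exists_isAdmissibleDirection_of_mem (hf : G.IsFracMatching f)
    (hu : u ∈ G.fractionalVertices f) {x y : V} {r : List V} (hnd : (x :: r).Nodup)
    (hW : (y :: x :: r).IsChain fun a b => f s(a, b) ∈ Set.Ioo 0 1) (hlast : r.getLastD x = u)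
    (hyr : r.head? ≠ some y) (hy : y ∈ x :: r) : ∃ δ, G.IsAdmissibleDirection f δ := by
  obtain ⟨a, b, hab⟩ := List.append_of_mem hy
  have hS : (y :: b).IsChain fun a b => f s(a, b) ∈ Set.Ioo 0 1 := by
    have := hW.tail
    rw [List.tail, hab] at this
    exact this.right_of_append
  have hbu : b.getLastD y = u := by
    have := congrArg List.getLast? hab
    simp only [List.getLast?_cons, List.getLast?_append, ← List.getLastD_eq_getLast?, hlast] at this
    simpa using this.symm
  have hxS : x ∉ y :: b := by
    have hxy : x ≠ y := (hf.adj (List.isChain_cons_cons.mp hW).1.1.ne').ne.symm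
    cases a with
    | nil => exact fun _ => hxy (List.cons.inj hab).1
    | cons c a =>
      obtain ⟨rfl, -⟩ := List.cons.inj hab
      rw [hab, List.cons_append, List.nodup_cons] at hnd
      exact fun h => hnd.1 (List.mem_append_right a h)
  have hWadj := hW.imp fun a b h => hf.adj h.1.ne'
  have hSadj := hS.imp fun a b h => hf.adj h.1.ne'
  -- `y :: b` is the walk from its earlier visit of `y` on; subtracting its alternating sum cancels
  -- the weight at `y` and leaves weight only at `u` (`±2` for an odd cycle, `0` for an even one)
  refine ⟨alternatingEdgeSum (y :: x :: r) - alternatingEdgeSum (y :: b),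
    fun h => ?_, fun e he => ?_, fun v hv => ?_⟩
  · have hS0 : alternatingEdgeSum (y :: b) s(y, x) = 0 := by
      rw [Sym2.eq_swap]
      exact alternatingEdgeSum_eq_zero_of_notMem hxS y
    simpa [alternatingEdgeSum_cons_cons_apply_self hnd hyr, hS0] using congrFun h s(y, x)
  · by_cases hW0 : alternatingEdgeSum (y :: x :: r) e = 0
    · exact support_alternatingEdgeSum_subset hS (by simpa [hW0] using he)
    · exact support_alternatingEdgeSum_subset hW hW0
  · rw [vertexWeight_sub, vertexWeight_alternatingEdgeSum hWadj,
      vertexWeight_alternatingEdgeSum hSadj, List.getLastD_cons, hlast, hbu] at hv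
    by_cases hvu : v = u
    · exact hvu ▸ hu
    · simp [hvu] at hv

/-- The walk is stored newest vertex first: `x :: r` runs from its current end `x` back to `u`. -/
theorem IsFracMatching.exists_isAdmissibleDirection_of_walk (hf : G.IsFracMatching f)
    (hu : u ∈ G.fractionalVertices f) (x : V) (r : List V) (hnd : (x :: r).Nodup)
    (hchain : (x :: r).IsChain fun a b => f s(a, b) ∈ Set.Ioo 0 1) (hlast : r.getLastD x = u)
    (hsat : ∀ v ∈ x :: r, v ≠ u → G.vertexWeight f v = 1) :
    ∃ δ, G.IsAdmissibleDirection f δ := by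
  obtain ⟨y, hxy, hyr⟩ : ∃ y, f s(x, y) ∈ Set.Ioo 0 1 ∧ r.head? ≠ some y := by
    cases r with
    | nil =>
      obtain ⟨y, hy⟩ := hf.exists_mem_Ioo_of_mem_fractionalVertices (hlast ▸ hu)
      exact ⟨y, hy, by simp⟩
    | cons z r =>
      have hxu : x ≠ u := by
        rintro rfl
        rw [List.getLastD_cons] at hlast
        exact (List.nodup_cons.mp hnd).1 (hlast ▸ List.getLastD_mem_cons)
      obtain ⟨y, hyz, hy⟩ :=
        hf.exists_ne_mem_Ioo (hsat x (by simp) hxu) (List.isChain_cons_cons.mp hchain).1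
      exact ⟨y, hy, by simpa using hyz.symm⟩
  have hW : (y :: x :: r).IsChain fun a b => f s(a, b) ∈ Set.Ioo 0 1 :=
    List.isChain_cons_cons.mpr ⟨by rwa [Sym2.eq_swap], hchain⟩
  by_cases hy : y ∈ x :: r
  · exact hf.exists_isAdmissibleDirection_of_mem hu hnd hW hlast hyr hy
  by_cases hyf : y ∈ G.fractionalVertices f
  · exact ⟨_, hf.isAdmissibleDirection_alternatingEdgeSum_of_notMem hu hnd hW hlast hy hyf⟩
  have hnd' : (y :: x :: r).Nodup := List.nodup_cons.mpr ⟨hy, hnd⟩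
  have : r.length + 1 < Fintype.card V := by simpa using hnd'.length_le_card
  refine hf.exists_isAdmissibleDirection_of_walk hu y (x :: r) hnd' hW
    (by rwa [List.getLastD_cons]) fun v hv hvu => ?_
  rcases List.mem_cons.mp hv with rfl | hv
  · have h0 := le_vertexWeight hf.nonneg (hf.adj hxy.1.ne') (Sym2.mem_mk_right x v)
    rw [mem_fractionalVertices] at hyf
    exact le_antisymm (hf.vertexWeight_le_one v) (not_lt.mp fun h => hyf ⟨hxy.1.trans_le h0, h⟩)
  · exact hsat v hv hvu
termination_by Fintype.card V - r.length

theorem IsFracMatching.exists_isAdmissibleDirection (hf : G.IsFracMatching f)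
    (hu : u ∈ G.fractionalVertices f) : ∃ δ, G.IsAdmissibleDirection f δ :=
  hf.exists_isAdmissibleDirection_of_walk hu u [] (by simp) (by simp) rfl (by simp)

theorem IsFracMatching.exists_integral_ge {f : Sym2 V → ℝ} (hf : G.IsFracMatching f) :
    ∃ g, G.IsFracMatching g ∧ G.fracWeight f ≤ G.fracWeight g ∧
      ∀ v, G.vertexWeight g v = 0 ∨ G.vertexWeight g v = 1 := by
  by_cases h : G.fractionalVertices f = ∅
  · refine ⟨f, hf, le_rfl, fun v => ?_⟩
    have hv : v ∉ G.fractionalVertices f := by simp [h]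
    rw [mem_fractionalVertices] at hv
    rcases (hf.vertexWeight_nonneg v).eq_or_lt with h0 | h0
    · exact .inl h0.symm
    · exact .inr (le_antisymm (hf.vertexWeight_le_one v) (not_lt.mp (hv ⟨h0, ·⟩)))
  obtain ⟨u, hu⟩ := nonempty_iff_ne_empty.mpr h
  obtain ⟨δ, hδ⟩ := hf.exists_isAdmissibleDirection hu
  obtain ⟨g, hg, hfg, hlt⟩ := hf.exists_improvement hδ
  obtain ⟨g', hg', hgg', hint⟩ := hg.exists_integral_ge
  exact ⟨g', hg', hfg.trans hgg', hint⟩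
termination_by #{e | f e ≠ 0} + #(G.fractionalVertices f)

theorem exists_isFracMatching_integral_max (G : SimpleGraph V) :
    ∃ g, G.IsFracMatching g ∧ (∀ v, G.vertexWeight g v = 0 ∨ G.vertexWeight g v = 1) ∧
      ∀ f, G.IsFracMatching f → G.fracWeight f ≤ G.fracWeight g := by
  obtain ⟨_, ⟨g, hg, hint, rfl⟩, hmax⟩ := Set.exists_max_image
    {s : Finset V | ∃ g, G.IsFracMatching g ∧
      (∀ v, G.vertexWeight g v = 0 ∨ G.vertexWeight g v = 1) ∧
      s = ({v | G.vertexWeight g v = 1} : Finset V)} card (Set.toFinite _)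
    ⟨_, 0, isFracMatching_zero, fun v => .inl (by simp [vertexWeight]), rfl⟩
  refine ⟨g, hg, hint, fun f hf => ?_⟩
  obtain ⟨g', hg', hfg', hint'⟩ := hf.exists_integral_ge
  have hcard : (#{v | G.vertexWeight g' v = 1} : ℝ) ≤ #{v | G.vertexWeight g v = 1} := by
    exact_mod_cast hmax _ ⟨g', hg', hint', rfl⟩
  linarith [two_mul_fracWeight_eq_card hint, two_mul_fracWeight_eq_card hint']

end AlternatingWalk

end SimpleGraph

theorem stmt_3 {V : Type*} [Fintype V] (G : SimpleGraph V) :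
    ∃ V₁ : Finset V, (V₁.card : ℝ) = 2 * G.fracNu ∧
      (∃ f, (G.induce (V₁ : Set V)).IsFracMatching f ∧
        (G.induce (V₁ : Set V)).fracWeight f = (V₁.card : ℝ) / 2) ∧
      ∀ u v : V, u ∉ V₁ → v ∉ V₁ → ¬ G.Adj u v := by
  obtain ⟨g, hg, hint, hmax⟩ := G.exists_isFracMatching_integral_max
  have hnu : G.fracNu = G.fracWeight g :=
    IsGreatest.csSup_eq ⟨⟨g, hg, rfl⟩, by rintro _ ⟨f, hf, rfl⟩; exact hmax f hf⟩
  set V₁ : Finset V := {v | G.vertexWeight g v = 1}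
  have hout {v : V} (hv : v ∉ V₁) : G.vertexWeight g v = 0 :=
    (hint v).resolve_right (by simpa [V₁] using hv)
  refine ⟨V₁, ?_, ?_, fun u v hu hv => ?_⟩
  · rw [hnu, SimpleGraph.two_mul_fracWeight_eq_card hint]
  · exact hg.exists_isFracMatching_induce V₁ (fun v hv => by simpa [V₁] using hv) fun v => hout
  · exact hg.not_adj_of_vertexWeight_lt_one hmax (by simp [hout hu]) (by simp [hout hv])
end

section
/- For any graph G of order n, the fractional matching number satisfies α'(G) = (1/2)(n − max over S ⊆ V(G) of (i(G − S) − |S|)), where i(G − S) is the number of isolated vertices of G − S. -/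
open Finset
open scoped Classical

set_option linter.unusedSectionVars false

section Aux

variable {V : Type*} [Fintype V] (G : SimpleGraph V)

/-- The isolated vertices of `G - S`. -/
private noncomputable def isoSet (S : Finset V) : Finset V :=
  Finset.univ.filter (fun v : V => v ∉ S ∧ ∀ w : V, G.Adj v w → w ∈ S)

private lemma aux_sum (f : Sym2 V → ℝ) (A : Finset V) :
    ∑ v ∈ A, ∑ e ∈ G.incidenceFinset v, f e
      = ∑ e ∈ G.edgeFinset, ((A.filter (fun v => v ∈ e)).card : ℝ) * f e := by
  have h : ∀ v : V, G.incidenceFinset v = G.edgeFinset.filter (fun e => v ∈ e) :=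
    fun v => G.incidenceFinset_eq_filter v
  calc ∑ v ∈ A, ∑ e ∈ G.incidenceFinset v, f e
      = ∑ v ∈ A, ∑ e ∈ G.edgeFinset, if v ∈ e then f e else 0 := by
        refine Finset.sum_congr rfl fun v _ => ?_
        rw [h v, Finset.sum_filter]
    _ = ∑ e ∈ G.edgeFinset, ∑ v ∈ A, if v ∈ e then f e else 0 := Finset.sum_comm
    _ = ∑ e ∈ G.edgeFinset, ((A.filter (fun v => v ∈ e)).card : ℝ) * f e := by
        refine Finset.sum_congr rfl fun e _ => ?_
        rw [Finset.sum_ite, Finset.sum_const, Finset.sum_const_zero, add_zero,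
          nsmul_eq_mul]

private lemma card_filter_mem_le (e : Sym2 V) (A : Finset V) :
    (A.filter (fun v => v ∈ e)).card ≤ 2 := by
  induction e with
  | _ a b =>
    have : A.filter (fun v => v ∈ s(a, b)) ⊆ {a, b} := by
      intro v hv
      simp only [Finset.mem_filter, Sym2.mem_iff] at hv
      simp only [Finset.mem_insert, Finset.mem_singleton]
      exact hv.2
    exact (Finset.card_le_card this).trans ((Finset.card_insert_le _ _).trans (by simp))

private lemma card_filter_mem_eq (e : Sym2 V) (he : e ∈ G.edgeSet) :
    ((Finset.univ : Finset V).filter (fun v => v ∈ e)).card = 2 := by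
  induction e with
  | _ a b =>
    have hab : a ≠ b := G.ne_of_adj he
    have : (Finset.univ : Finset V).filter (fun v => v ∈ s(a, b)) = {a, b} := by
      ext v
      simp [Sym2.mem_iff]
    rw [this, Finset.card_insert_of_notMem (by simpa), Finset.card_singleton]

/-- Upper bound: for any fractional matching and any `S`. -/
private lemma weight_le (f : Sym2 V → ℝ) (hf : G.IsFracMatching f) (S : Finset V) :
    2 * G.fracWeight f ≤ (Fintype.card V : ℝ) -
      (((isoSet G S).card : ℝ) - (S.card : ℝ)) := by
  obtain ⟨hf01, hf0, hfv⟩ := hf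
  set I : Finset V := isoSet G S with hI
  -- I and S are disjoint
  have hIS : Disjoint S I := by
    rw [Finset.disjoint_right]
    intro v hv
    simp only [hI, isoSet, Finset.mem_filter] at hv
    exact hv.2.1
  -- 2 * total weight = sum over all vertices
  have h2w : ∑ v : V, ∑ e ∈ G.incidenceFinset v, f e = 2 * G.fracWeight f := by
    rw [aux_sum G f Finset.univ, SimpleGraph.fracWeight, Finset.mul_sum]
    refine Finset.sum_congr rfl fun e he => ?_
    rw [card_filter_mem_eq G e (SimpleGraph.mem_edgeFinset.mp he)]
    norm_num
  -- sum over I is at most sum over S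
  have hIleS : ∑ v ∈ I, ∑ e ∈ G.incidenceFinset v, f e
      ≤ ∑ v ∈ S, ∑ e ∈ G.incidenceFinset v, f e := by
    rw [aux_sum G f I, aux_sum G f S]
    refine Finset.sum_le_sum fun e he => ?_
    have hfe : 0 ≤ f e := (hf01 e).1
    refine mul_le_mul_of_nonneg_right ?_ hfe
    rcases Finset.eq_empty_or_nonempty (I.filter (fun v => v ∈ e)) with h | ⟨v, hv⟩
    · rw [h]
      simp
    · simp only [Finset.mem_filter] at hv
      obtain ⟨hvI, hve⟩ := hv
      obtain ⟨w, rfl⟩ := Sym2.mem_iff_exists.mp hve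
      have hadj : G.Adj v w := SimpleGraph.mem_edgeFinset.mp he
      simp only [hI, isoSet, Finset.mem_filter] at hvI
      have hwS : w ∈ S := hvI.2.2 w hadj
      have h1 : I.filter (fun u => u ∈ s(v, w)) ⊆ {v} := by
        intro u hu
        simp only [Finset.mem_filter, Sym2.mem_iff] at hu
        rcases hu.2 with rfl | rfl
        · exact Finset.mem_singleton_self u
        · exact absurd hwS (by
            have := hu.1
            simp only [hI, isoSet, Finset.mem_filter] at this
            exact this.2.1)
      have h2 : ({w} : Finset V) ⊆ S.filter (fun u => u ∈ s(v, w)) := by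
        intro u hu
        rw [Finset.mem_singleton] at hu
        subst hu
        simp [hwS]
      calc ((I.filter (fun u => u ∈ s(v, w))).card : ℝ)
          ≤ (({v} : Finset V).card : ℝ) := by
            exact_mod_cast Finset.card_le_card h1
        _ = 1 := by simp
        _ ≤ ((S.filter (fun u => u ∈ s(v, w))).card : ℝ) := by
            have := Finset.card_le_card h2
            simp only [Finset.card_singleton] at this
            exact_mod_cast this
  -- bounds on sums over S and the rest
  have hsum_le : ∀ A : Finset V, ∑ v ∈ A, ∑ e ∈ G.incidenceFinset v, f e ≤ (A.card : ℝ) := by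
    intro A
    calc ∑ v ∈ A, ∑ e ∈ G.incidenceFinset v, f e ≤ ∑ _v ∈ A, (1 : ℝ) :=
          Finset.sum_le_sum fun v _ => hfv v
      _ = (A.card : ℝ) := by simp
  -- split the full sum
  have hsplit : ∑ v : V, ∑ e ∈ G.incidenceFinset v, f e
      = (∑ v ∈ S, ∑ e ∈ G.incidenceFinset v, f e)
        + (∑ v ∈ I, ∑ e ∈ G.incidenceFinset v, f e)
        + ∑ v ∈ (S ∪ I)ᶜ, ∑ e ∈ G.incidenceFinset v, f e := by
    rw [← Finset.sum_union hIS, Finset.sum_add_sum_compl]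
  have hcard : ((S ∪ I)ᶜ.card : ℝ) = (Fintype.card V : ℝ) - (S.card : ℝ) - (I.card : ℝ) := by
    have h1 : (S ∪ I).card = S.card + I.card := Finset.card_union_of_disjoint hIS
    have h2 : (S ∪ I)ᶜ.card = Fintype.card V - (S ∪ I).card := Finset.card_compl _
    have h3 : (S ∪ I).card ≤ Fintype.card V := Finset.card_le_card (Finset.subset_univ _) |>.trans_eq (Finset.card_univ)
    rw [h2, h1] at *
    push_cast [Nat.cast_sub (h1 ▸ h3)]
    ring
  have := hsum_le (S ∪ I)ᶜ
  have hS := hsum_le S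
  rw [← h2w, hsplit]
  rw [hcard] at this
  linarith

private lemma hall_cond (d : ℤ)
    (hd : ∀ S : Finset V, ((isoSet G S).card : ℤ) - (S.card : ℤ) ≤ d) (X : Finset V) :
    (X.card : ℤ) ≤ ((X.biUnion (fun v => G.neighborFinset v)).card : ℤ) + d := by
  set Nx := X.biUnion (fun v => G.neighborFinset v) with hNx
  set S := Nx \ X with hS
  have hsub : X \ Nx ⊆ isoSet G S := by
    intro v hv
    rw [Finset.mem_sdiff] at hv
    simp only [isoSet, Finset.mem_filter, Finset.mem_univ, true_and]
    constructor
    · rw [hS, Finset.mem_sdiff]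
      tauto
    · intro w hw
      have hwNx : w ∈ Nx := Finset.mem_biUnion.mpr
        ⟨v, hv.1, (SimpleGraph.mem_neighborFinset _ _ _).mpr hw⟩
      rw [hS, Finset.mem_sdiff]
      refine ⟨hwNx, fun hwX => hv.2 ?_⟩
      exact Finset.mem_biUnion.mpr
        ⟨w, hwX, (SimpleGraph.mem_neighborFinset _ _ _).mpr hw.symm⟩
  have e4 : (X \ Nx).card ≤ (isoSet G S).card := Finset.card_le_card hsub
  have e1 : (X \ Nx).card + (X ∩ Nx).card = X.card := Finset.card_sdiff_add_card_inter X Nx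
  have e2 : S.card + (Nx ∩ X).card = Nx.card := by
    rw [hS]
    exact Finset.card_sdiff_add_card_inter Nx X
  have e3 : (X ∩ Nx).card = (Nx ∩ X).card := by rw [Finset.inter_comm]
  have hIS := hd S
  omega

private lemma exists_good (d : ℤ) (hd0 : 0 ≤ d)
    (hd : ∀ S : Finset V, ((isoSet G S).card : ℤ) - (S.card : ℤ) ≤ d) :
    ∃ f, G.IsFracMatching f ∧ ((Fintype.card V : ℝ) - (d : ℝ)) / 2 ≤ G.fracWeight f := by
  classical
  set D := d.toNat with hDdef
  have hD : (D : ℤ) = d := Int.toNat_of_nonneg hd0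
  set t : V → Finset (V ⊕ Fin D) := fun v =>
    (G.neighborFinset v).image Sum.inl ∪ (Finset.univ : Finset (Fin D)).image Sum.inr with ht
  have hhall : ∀ s : Finset V, s.card ≤ (s.biUnion t).card := by
    intro s
    rcases Finset.eq_empty_or_nonempty s with rfl | ⟨x, hx⟩
    · simp
    · have hsb : s.biUnion t =
          (s.biUnion (fun v => G.neighborFinset v)).image Sum.inl ∪
            (Finset.univ : Finset (Fin D)).image Sum.inr := by
        ext u
        simp only [Finset.mem_biUnion, ht, Finset.mem_union, Finset.mem_image]
        constructor
        · rintro ⟨v, hv, ⟨w, hw, rfl⟩ | h⟩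
          · exact Or.inl ⟨w, ⟨v, hv, hw⟩, rfl⟩
          · exact Or.inr h
        · rintro (⟨w, ⟨v, hv, hw⟩, rfl⟩ | h)
          · exact ⟨v, hv, Or.inl ⟨w, hw, rfl⟩⟩
          · exact ⟨x, hx, Or.inr h⟩
      have hdisj : Disjoint ((s.biUnion (fun v => G.neighborFinset v)).image Sum.inl)
          ((Finset.univ : Finset (Fin D)).image Sum.inr) := by
        rw [Finset.disjoint_left]
        rintro a ha hb
        simp only [Finset.mem_image] at ha hb
        obtain ⟨_, _, rfl⟩ := ha
        obtain ⟨_, _, h⟩ := hb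
        simp at h
      rw [hsb, Finset.card_union_of_disjoint hdisj,
        Finset.card_image_of_injective _ Sum.inl_injective,
        Finset.card_image_of_injective _ Sum.inr_injective, Finset.card_univ, Fintype.card_fin]
      have := hall_cond G d hd s
      omega
  obtain ⟨F, hFinj, hFt⟩ := (Finset.all_card_le_biUnion_card_iff_exists_injective t).mp hhall
  set p : V → Option (Sym2 V) := fun v =>
    Sum.elim (fun w => (some s(v, w) : Option (Sym2 V))) (fun _ => none) (F v) with hp
  have hmem : ∀ v w, F v = Sum.inl w → G.Adj v w := by
    intro v w hFv
    have h := hFt v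
    rw [hFv] at h
    simp only [ht, Finset.mem_union, Finset.mem_image] at h
    rcases h with ⟨u, hu, hue⟩ | ⟨i, _, hie⟩
    · obtain rfl : u = w := Sum.inl.inj hue
      exact (SimpleGraph.mem_neighborFinset _ _ _).mp hu
    · simp at hie
  have hp1 : ∀ v e, p v = some e → ∃ w, F v = Sum.inl w ∧ e = s(v, w) := by
    intro v e hv
    simp only [hp] at hv
    cases hFv : F v with
    | inl w =>
      rw [hFv] at hv
      simp only [Sum.elim_inl, Option.some.injEq] at hv
      exact ⟨w, rfl, hv.symm⟩
    | inr i =>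
      rw [hFv] at hv
      simp at hv
  have hpe : ∀ v e, p v = some e → v ∈ e ∧ e ∈ G.edgeSet := by
    intro v e hv
    obtain ⟨w, hFv, rfl⟩ := hp1 v e hv
    exact ⟨Sym2.mem_mk_left v w, (G.mem_edgeSet).mpr (hmem v w hFv)⟩
  set f : Sym2 V → ℝ :=
    fun e => ((Finset.univ.filter (fun v => p v = some e)).card : ℝ) / 2 with hfdef
  have hdisjf : ∀ e ∈ (Finset.univ : Finset (Sym2 V)), ∀ e' ∈ (Finset.univ : Finset (Sym2 V)),
      e ≠ e' → Disjoint (Finset.univ.filter (fun v => p v = some e))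
        (Finset.univ.filter (fun v => p v = some e')) := by
    intro e _ e' _ hne
    rw [Finset.disjoint_left]
    intro u hu hu'
    simp only [Finset.mem_filter] at hu hu'
    exact hne (Option.some.inj (hu.2.symm.trans hu'.2))
  have hfsub : ∀ e : Sym2 V, Finset.univ.filter (fun v => p v = some e)
      ⊆ Finset.univ.filter (fun v => v ∈ e) := by
    intro e u hu
    rw [Finset.mem_filter] at hu ⊢
    exact ⟨hu.1, (hpe u e hu.2).1⟩
  have hf01 : ∀ e, (0 : ℝ) ≤ f e ∧ f e ≤ 1 := by
    intro e
    constructor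
    · simp only [hfdef]
      positivity
    · simp only [hfdef]
      have h2 := (Finset.card_le_card (hfsub e)).trans (card_filter_mem_le e Finset.univ)
      have h3 : ((Finset.univ.filter (fun v => p v = some e)).card : ℝ) ≤ 2 := by
        exact_mod_cast h2
      linarith
  have hf0 : ∀ e, e ∉ G.edgeSet → f e = 0 := by
    intro e he
    simp only [hfdef]
    have hemp : Finset.univ.filter (fun v => p v = some e) = ∅ := by
      rw [Finset.filter_eq_empty_iff]
      intro v _ hv
      exact he (hpe v e hv).2
    rw [hemp]
    simp
  have hvert : ∀ v : V, ∑ e ∈ G.incidenceFinset v, f e ≤ 1 := by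
    intro v
    have hcb : ∑ e ∈ G.incidenceFinset v, (Finset.univ.filter (fun u => p u = some e)).card
        = ((G.incidenceFinset v).biUnion
            (fun e => Finset.univ.filter (fun u => p u = some e))).card :=
      (Finset.card_biUnion (fun e he e' he' h =>
        hdisjf e (Finset.mem_univ e) e' (Finset.mem_univ e') h)).symm
    have hsub : (G.incidenceFinset v).biUnion (fun e => Finset.univ.filter (fun u => p u = some e))
        ⊆ insert v (Finset.univ.filter (fun u => F u = Sum.inl v)) := by
      intro u hu
      rw [Finset.mem_biUnion] at hu
      obtain ⟨e, he, hu⟩ := hu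
      rw [Finset.mem_filter] at hu
      obtain ⟨w, hFw, rfl⟩ := hp1 u e hu.2
      rw [SimpleGraph.incidenceFinset_eq_filter, Finset.mem_filter] at he
      have hve := he.2
      rw [Sym2.mem_iff] at hve
      rcases hve with rfl | rfl
      · exact Finset.mem_insert_self _ _
      · exact Finset.mem_insert_of_mem (by simp [hFw])
    have hc1 : (Finset.univ.filter (fun u => F u = Sum.inl v)).card ≤ 1 := by
      refine Finset.card_le_one.mpr ?_
      intro a ha b hb
      rw [Finset.mem_filter] at ha hb
      exact hFinj (ha.2.trans hb.2.symm)
    have hc2 : ((G.incidenceFinset v).biUnion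
        (fun e => Finset.univ.filter (fun u => p u = some e))).card ≤ 2 := by
      refine (Finset.card_le_card hsub).trans ((Finset.card_insert_le _ _).trans ?_)
      omega
    have hsum : ∑ e ∈ G.incidenceFinset v, f e
        = ((∑ e ∈ G.incidenceFinset v,
            (Finset.univ.filter (fun u => p u = some e)).card : ℕ) : ℝ) / 2 := by
      simp only [hfdef]
      rw [← Finset.sum_div, Nat.cast_sum]
    rw [hsum, hcb]
    have h4 : (((G.incidenceFinset v).biUnion
        (fun e => Finset.univ.filter (fun u => p u = some e))).card : ℝ) ≤ 2 := by
      exact_mod_cast hc2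
    linarith
  have hbu : G.edgeFinset.biUnion (fun e => Finset.univ.filter (fun u => p u = some e))
      = Finset.univ.filter (fun v => (p v).isSome) := by
    ext u
    simp only [Finset.mem_biUnion, Finset.mem_filter, Finset.mem_univ, true_and]
    constructor
    · rintro ⟨e, he, hu⟩
      rw [hu]
      rfl
    · intro h
      obtain ⟨e, he⟩ := Option.isSome_iff_exists.mp h
      exact ⟨e, SimpleGraph.mem_edgeFinset.mpr (hpe u e he).2, he⟩
  have hw : G.fracWeight f
      = (((Finset.univ.filter (fun v => (p v).isSome)).card : ℕ) : ℝ) / 2 := by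
    rw [SimpleGraph.fracWeight]
    simp only [hfdef]
    rw [← Finset.sum_div, ← Nat.cast_sum,
      ← Finset.card_biUnion (fun e he e' he' h =>
        hdisjf e (Finset.mem_univ e) e' (Finset.mem_univ e') h),
      hbu]
  have hneg : (Finset.univ.filter (fun v => ¬ (p v).isSome)).card ≤ D := by
    have hmap : ∀ v ∈ Finset.univ.filter (fun v => ¬ (p v).isSome),
        F v ∈ (Finset.univ : Finset (Fin D)).image Sum.inr := by
      intro v hv
      rw [Finset.mem_filter] at hv
      cases hFv : F v with
      | inl w =>
        exact absurd (by simp only [hp]; rw [hFv]; rfl) hv.2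
      | inr i =>
        simp [hFv]
    calc (Finset.univ.filter (fun v => ¬ (p v).isSome)).card
        ≤ ((Finset.univ : Finset (Fin D)).image Sum.inr).card :=
          Finset.card_le_card_of_injOn F hmap (fun a _ b _ h => hFinj h)
      _ = D := by
          rw [Finset.card_image_of_injective _ Sum.inr_injective, Finset.card_univ,
            Fintype.card_fin]
  have hdomcard : (Fintype.card V : ℤ) - (D : ℤ)
      ≤ ((Finset.univ.filter (fun v => (p v).isSome)).card : ℤ) := by
    have hsplit := Finset.card_filter_add_card_filter_not
      (s := (Finset.univ : Finset V)) (p := fun v => (p v).isSome)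
    rw [Finset.card_univ] at hsplit
    omega
  refine ⟨f, ⟨hf01, hf0, hvert⟩, ?_⟩
  rw [hw]
  have hfin : (Fintype.card V : ℝ) - (d : ℝ)
      ≤ ((Finset.univ.filter (fun v => (p v).isSome)).card : ℝ) := by
    have h := hdomcard
    rw [hD] at h
    exact_mod_cast h
  linarith

private lemma final (d : ℤ) (hd0 : 0 ≤ d)
    (hdle : ∀ S : Finset V, ((isoSet G S).card : ℤ) - (S.card : ℤ) ≤ d)
    (S₀ : Finset V) (hS₀ : ((isoSet G S₀).card : ℤ) - (S₀.card : ℤ) = d) :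
    G.fracNu = 1/2 * ((Fintype.card V : ℝ) - (d : ℝ)) := by
  have hcast : ((d : ℤ) : ℝ) = ((isoSet G S₀).card : ℝ) - (S₀.card : ℝ) := by
    rw [← hS₀]
    push_cast
    ring
  have hub : ∀ x ∈ {x : ℝ | ∃ f, G.IsFracMatching f ∧ G.fracWeight f = x},
      x ≤ 1/2 * ((Fintype.card V : ℝ) - ((d : ℤ) : ℝ)) := by
    rintro x ⟨f, hf, rfl⟩
    have hw := weight_le G f hf S₀
    rw [hcast]
    linarith
  have hne : {x : ℝ | ∃ f, G.IsFracMatching f ∧ G.fracWeight f = x}.Nonempty := by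
    refine ⟨G.fracWeight (fun _ => 0), fun _ => 0, ⟨?_, ?_, ?_⟩, rfl⟩
    · intro e
      norm_num
    · intro e _
      rfl
    · intro v
      simp
  obtain ⟨f, hf, hwe⟩ := exists_good G d hd0 hdle
  apply le_antisymm
  · exact csSup_le hne hub
  · have h1 : G.fracWeight f ≤ G.fracNu :=
      le_csSup ⟨_, fun x hx => hub x hx⟩ ⟨f, hf, rfl⟩
    linarith

end Aux

theorem stmt_4 {V : Type*} [Fintype V] (G : SimpleGraph V) :
    G.fracNu = (1/2) * ((Fintype.card V : ℝ) -
      (((Finset.univ : Finset (Finset V)).sup' ⟨∅, Finset.mem_univ ∅⟩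
        (fun S => ((Finset.univ.filter
            (fun v : V => v ∉ S ∧ ∀ w : V, G.Adj v w → w ∈ S)).card : ℤ)
          - (S.card : ℤ)) : ℤ) : ℝ)) := by
  classical
  have hiso : ∀ S : Finset V, Finset.univ.filter
      (fun v : V => v ∉ S ∧ ∀ w : V, G.Adj v w → w ∈ S) = isoSet G S := fun S => rfl
  have hdle : ∀ S : Finset V, ((isoSet G S).card : ℤ) - (S.card : ℤ) ≤
      (Finset.univ : Finset (Finset V)).sup' ⟨∅, Finset.mem_univ ∅⟩
        (fun S => ((Finset.univ.filter
            (fun v : V => v ∉ S ∧ ∀ w : V, G.Adj v w → w ∈ S)).card : ℤ)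
          - (S.card : ℤ)) := by
    intro S
    rw [← hiso S]
    have h := Finset.le_sup' (fun S : Finset V => ((Finset.univ.filter
        (fun v : V => v ∉ S ∧ ∀ w : V, G.Adj v w → w ∈ S)).card : ℤ)
      - (S.card : ℤ)) (Finset.mem_univ S)
    simpa using h
  have hd0 : (0 : ℤ) ≤ (Finset.univ : Finset (Finset V)).sup' ⟨∅, Finset.mem_univ ∅⟩
        (fun S => ((Finset.univ.filter
            (fun v : V => v ∉ S ∧ ∀ w : V, G.Adj v w → w ∈ S)).card : ℤ)
          - (S.card : ℤ)) := by
    have h0 : (0 : ℤ) ≤ ((isoSet G (∅ : Finset V)).card : ℤ) - ((∅ : Finset V).card : ℤ) := by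
      simp
    exact h0.trans (hdle ∅)
  obtain ⟨S₀, -, hS₀⟩ := Finset.exists_mem_eq_sup'
    (⟨∅, Finset.mem_univ ∅⟩ : (Finset.univ : Finset (Finset V)).Nonempty)
    (fun S => ((Finset.univ.filter
        (fun v : V => v ∉ S ∧ ∀ w : V, G.Adj v w → w ∈ S)).card : ℤ)
      - (S.card : ℤ))
  exact final G _ hd0 hdle S₀ (by rw [hiso S₀] at hS₀; exact hS₀.symm)
end

section
/- For a graph G of order n, α'(G) = 3/2 if and only if G is isomorphic to the disjoint union of a triangle C₃ and n − 3 isolated vertices. -/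
open Finset
open scoped Classical

section Aux
variable {V : Type*} [Fintype V] (G : SimpleGraph V)

lemma aux_bddAbove :
    BddAbove {x : ℝ | ∃ f, G.IsFracMatching f ∧ G.fracWeight f = x} := by
  refine ⟨(G.edgeFinset.card : ℝ), ?_⟩
  rintro x ⟨f, hf, rfl⟩
  calc G.fracWeight f ≤ ∑ _e ∈ G.edgeFinset, (1:ℝ) :=
        Finset.sum_le_sum fun e _ => (hf.1 e).2
    _ = G.edgeFinset.card := by simp

lemma aux_nonempty :
    (0:ℝ) ∈ {x : ℝ | ∃ f, G.IsFracMatching f ∧ G.fracWeight f = x} := by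
  exact ⟨fun _ => 0, ⟨fun e => by norm_num, fun e _ => rfl, fun v => by simp⟩,
    by simp [SimpleGraph.fracWeight]⟩

end Aux

section Aux
variable {V : Type*} [Fintype V] {G : SimpleGraph V}

lemma tri_edgeFinset {a b c : V} (hab : a ≠ b) (hac : a ≠ c) (hbc : b ≠ c)
    (h : ∀ x y : V, G.Adj x y ↔
      (x ≠ y ∧ x ∈ ({a, b, c} : Set V) ∧ y ∈ ({a, b, c} : Set V))) :
    G.edgeFinset = {s(a,b), s(a,c), s(b,c)} := by
  ext e
  induction e with
  | _ x y =>
    simp only [SimpleGraph.mem_edgeFinset, SimpleGraph.mem_edgeSet, h, mem_insert,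
      mem_singleton, Sym2.eq, Sym2.rel_iff', Prod.mk.injEq, Prod.swap_prod_mk,
      Set.mem_insert_iff, Set.mem_singleton_iff]
    constructor
    · rintro ⟨hxy, (rfl|rfl|rfl), (rfl|rfl|rfl)⟩ <;> tauto
    · rintro ((⟨rfl,rfl⟩|⟨rfl,rfl⟩)|(⟨rfl,rfl⟩|⟨rfl,rfl⟩)|(⟨rfl,rfl⟩|⟨rfl,rfl⟩)) <;> tauto

lemma tri_inc {a b c : V} (hab : a ≠ b) (hac : a ≠ c) (hbc : b ≠ c)
    (h : ∀ x y : V, G.Adj x y ↔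
      (x ≠ y ∧ x ∈ ({a, b, c} : Set V) ∧ y ∈ ({a, b, c} : Set V))) (v : V) :
    G.incidenceFinset v = ({s(a,b), s(a,c), s(b,c)} : Finset (Sym2 V)).filter (v ∈ ·) := by
  rw [G.incidenceFinset_eq_filter, tri_edgeFinset hab hac hbc h]

lemma tri_lower {a b c : V} (hab : a ≠ b) (hac : a ≠ c) (hbc : b ≠ c)
    (h : ∀ x y : V, G.Adj x y ↔
      (x ≠ y ∧ x ∈ ({a, b, c} : Set V) ∧ y ∈ ({a, b, c} : Set V))) :
    ∃ f, G.IsFracMatching f ∧ G.fracWeight f = 3/2 := by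
  refine ⟨fun e => if e ∈ G.edgeFinset then 1/2 else 0, ⟨?_, ?_, ?_⟩, ?_⟩
  · intro e; by_cases he : e ∈ G.edgeFinset <;> simp [he] <;> norm_num
  · intro e he; simp [SimpleGraph.mem_edgeFinset, he]
  · intro v
    rw [tri_inc hab hac hbc h]
    have hsub : ({s(a,b), s(a,c), s(b,c)} : Finset (Sym2 V)).filter (v ∈ ·) ⊆
        G.edgeFinset := by
      rw [tri_edgeFinset hab hac hbc h]; exact filter_subset _ _
    calc ∑ e ∈ ({s(a,b), s(a,c), s(b,c)} : Finset (Sym2 V)).filter (v ∈ ·),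
          (if e ∈ G.edgeFinset then (1:ℝ)/2 else 0)
        = ∑ e ∈ ({s(a,b), s(a,c), s(b,c)} : Finset (Sym2 V)).filter (v ∈ ·), (1:ℝ)/2 := by
          refine Finset.sum_congr rfl fun e he => ?_
          rw [if_pos (hsub he)]
      _ = (({s(a,b), s(a,c), s(b,c)} : Finset (Sym2 V)).filter (v ∈ ·)).card * (1/2) := by
          rw [Finset.sum_const]; ring
      _ ≤ 1 := by
          have h2 : (({s(a,b), s(a,c), s(b,c)} : Finset (Sym2 V)).filter (v ∈ ·)).card ≤ 2 := by
            by_contra hgt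
            push_neg at hgt
            have hsub3 : ({s(a,b), s(a,c), s(b,c)} : Finset (Sym2 V)).filter (v ∈ ·) ⊆
                {s(a,b), s(a,c), s(b,c)} := filter_subset _ _
            have hcard3 : ({s(a,b), s(a,c), s(b,c)} : Finset (Sym2 V)).card ≤ 3 := by
              have k1 := Finset.card_insert_le (s(a,b)) ({s(a,c), s(b,c)} : Finset (Sym2 V))
              have k2 := Finset.card_insert_le (s(a,c)) ({s(b,c)} : Finset (Sym2 V))
              have k3 : ({s(b,c)} : Finset (Sym2 V)).card = 1 := card_singleton _
              omega
            have heq : ({s(a,b), s(a,c), s(b,c)} : Finset (Sym2 V)).filter (v ∈ ·) =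
                {s(a,b), s(a,c), s(b,c)} := by
              apply Finset.eq_of_subset_of_card_le hsub3
              omega
            have h1 : s(a,b) ∈ ({s(a,b), s(a,c), s(b,c)} : Finset (Sym2 V)).filter (v ∈ ·) := by
              rw [heq]; simp
            have h2' : s(b,c) ∈ ({s(a,b), s(a,c), s(b,c)} : Finset (Sym2 V)).filter (v ∈ ·) := by
              rw [heq]; simp
            have h3' : s(a,c) ∈ ({s(a,b), s(a,c), s(b,c)} : Finset (Sym2 V)).filter (v ∈ ·) := by
              rw [heq]; simp
            simp only [mem_filter, Sym2.mem_iff] at h1 h2' h3'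
            rcases h3'.2 with h|h <;> rcases h1.2 with h'|h' <;>
              rcases h2'.2 with h''|h'' <;> simp_all
          have := (Nat.cast_le (α := ℝ)).mpr h2
          push_cast at this ⊢
          nlinarith
  · unfold SimpleGraph.fracWeight
    rw [Finset.sum_congr rfl (fun e he => if_pos he), Finset.sum_const,
      tri_edgeFinset hab hac hbc h]
    have hcard : ({s(a,b), s(a,c), s(b,c)} : Finset (Sym2 V)).card = 3 := by
      rw [card_insert_of_notMem, card_insert_of_notMem, card_singleton]
      · simp only [mem_singleton, Sym2.eq, Sym2.rel_iff', Prod.mk.injEq, Prod.swap_prod_mk]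
        tauto
      · simp only [mem_insert, mem_singleton, Sym2.eq, Sym2.rel_iff', Prod.mk.injEq,
          Prod.swap_prod_mk]
        tauto
    rw [hcard]; norm_num

lemma tri_upper {a b c : V} (hab : a ≠ b) (hac : a ≠ c) (hbc : b ≠ c)
    (h : ∀ x y : V, G.Adj x y ↔
      (x ≠ y ∧ x ∈ ({a, b, c} : Set V) ∧ y ∈ ({a, b, c} : Set V)))
    {f : Sym2 V → ℝ} (hf : G.IsFracMatching f) : G.fracWeight f ≤ 3/2 := by
  have hne1 : s(a,b) ≠ s(a,c) := by
    simp only [ne_eq, Sym2.eq, Sym2.rel_iff', Prod.mk.injEq, Prod.swap_prod_mk]; tauto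
  have hne2 : s(a,b) ≠ s(b,c) := by
    simp only [ne_eq, Sym2.eq, Sym2.rel_iff', Prod.mk.injEq, Prod.swap_prod_mk]; tauto
  have hne3 : s(a,c) ≠ s(b,c) := by
    simp only [ne_eq, Sym2.eq, Sym2.rel_iff', Prod.mk.injEq, Prod.swap_prod_mk]; tauto
  have hw : G.fracWeight f = f s(a,b) + f s(a,c) + f s(b,c) := by
    unfold SimpleGraph.fracWeight
    rw [tri_edgeFinset hab hac hbc h]
    rw [Finset.sum_insert (by simp [hne1, hne2]), Finset.sum_insert (by simp [hne3]),
      Finset.sum_singleton]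
    ring
  have hva := hf.2.2 a
  have hvb := hf.2.2 b
  have hvc := hf.2.2 c
  rw [tri_inc hab hac hbc h] at hva hvb hvc
  have hfa : ({s(a,b), s(a,c), s(b,c)} : Finset (Sym2 V)).filter (a ∈ ·) =
      {s(a,b), s(a,c)} := by
    ext e
    simp only [mem_filter, mem_insert, mem_singleton, Sym2.mem_iff]
    constructor
    · rintro ⟨(rfl|rfl|rfl), hm⟩ <;> simp_all <;> tauto
    · rintro (rfl|rfl) <;> simp
  have hfb : ({s(a,b), s(a,c), s(b,c)} : Finset (Sym2 V)).filter (b ∈ ·) =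
      {s(a,b), s(b,c)} := by
    ext e
    simp only [mem_filter, mem_insert, mem_singleton, Sym2.mem_iff]
    constructor
    · rintro ⟨(rfl|rfl|rfl), hm⟩ <;> simp_all <;> tauto
    · rintro (rfl|rfl) <;> simp
  have hfc : ({s(a,b), s(a,c), s(b,c)} : Finset (Sym2 V)).filter (c ∈ ·) =
      {s(a,c), s(b,c)} := by
    ext e
    simp only [mem_filter, mem_insert, mem_singleton, Sym2.mem_iff]
    constructor
    · rintro ⟨(rfl|rfl|rfl), hm⟩ <;> simp_all <;> tauto
    · rintro (rfl|rfl) <;> simp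
  rw [hfa, Finset.sum_insert (by simp [hne1]), Finset.sum_singleton] at hva
  rw [hfb, Finset.sum_insert (by simp [hne2]), Finset.sum_singleton] at hvb
  rw [hfc, Finset.sum_insert (by simp [hne3]), Finset.sum_singleton] at hvc
  linarith [hw]

end Aux
section Fwd
variable {V : Type*} [Fintype V] {G : SimpleGraph V}

lemma fw_inter
    (hub : ∀ f, G.IsFracMatching f → G.fracWeight f ≤ 3/2) :
    ∀ e₁ ∈ G.edgeFinset, ∀ e₂ ∈ G.edgeFinset, e₁ ≠ e₂ → ∃ v, v ∈ e₁ ∧ v ∈ e₂ := by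
  intro e₁ he₁ e₂ he₂ hne
  by_contra hno
  push_neg at hno
  set f : Sym2 V → ℝ := fun e => (if e = e₁ then 1 else 0) + (if e = e₂ then 1 else 0) with hfdef
  have hfm : G.IsFracMatching f := by
    refine ⟨?_, ?_, ?_⟩
    · intro e
      simp only [hfdef]
      by_cases h1 : e = e₁ <;> by_cases h2 : e = e₂ <;> simp_all <;> norm_num
    · intro e he
      have h1 : e ≠ e₁ := fun h => he (by rw [h]; exact SimpleGraph.mem_edgeFinset.mp he₁)
      have h2 : e ≠ e₂ := fun h => he (by rw [h]; exact SimpleGraph.mem_edgeFinset.mp he₂)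
      simp [hfdef, h1, h2]
    · intro v
      rw [Finset.sum_add_distrib, Finset.sum_ite_eq' _ e₁ (fun _ => (1:ℝ)),
        Finset.sum_ite_eq' _ e₂ (fun _ => (1:ℝ))]
      by_cases h1 : e₁ ∈ G.incidenceFinset v
      · have hv1 : v ∈ e₁ := by
          rw [SimpleGraph.mem_incidenceFinset] at h1; exact h1.2
        have h2 : e₂ ∉ G.incidenceFinset v := by
          intro h2
          rw [SimpleGraph.mem_incidenceFinset] at h2
          exact hno v hv1 h2.2
        simp [h1, h2]
      · simp only [if_neg h1]
        split <;> norm_num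
  have hw : G.fracWeight f = 2 := by
    unfold SimpleGraph.fracWeight
    rw [Finset.sum_add_distrib, Finset.sum_ite_eq' _ e₁ (fun _ => (1:ℝ)),
      Finset.sum_ite_eq' _ e₂ (fun _ => (1:ℝ)), if_pos he₁, if_pos he₂]
    norm_num
  have := hub f hfm
  rw [hw] at this
  norm_num at this

lemma fw_main (h : G.fracNu = 3/2) : ∃ a b c : V, a ≠ b ∧ a ≠ c ∧ b ≠ c ∧
    ∀ x y : V, G.Adj x y ↔
      (x ≠ y ∧ x ∈ ({a, b, c} : Set V) ∧ y ∈ ({a, b, c} : Set V)) := by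
  have hbdd := aux_bddAbove G
  have hnem : Set.Nonempty {x : ℝ | ∃ f, G.IsFracMatching f ∧ G.fracWeight f = x} :=
    ⟨0, aux_nonempty G⟩
  have hub : ∀ f, G.IsFracMatching f → G.fracWeight f ≤ 3/2 := fun f hf => by
    have h2 : G.fracWeight f ≤ G.fracNu := le_csSup hbdd (Set.mem_setOf.mpr ⟨f, hf, rfl⟩)
    rwa [h] at h2
  -- there are at least two edges
  have hcard : 1 < G.edgeFinset.card := by
    by_contra hlt
    push_neg at hlt
    have hle1 : G.fracNu ≤ 1 := by
      apply csSup_le hnem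
      rintro x ⟨f, hf, rfl⟩
      calc G.fracWeight f ≤ ∑ _e ∈ G.edgeFinset, (1:ℝ) :=
            Finset.sum_le_sum fun e _ => (hf.1 e).2
        _ = G.edgeFinset.card := by simp
        _ ≤ 1 := by exact_mod_cast hlt
    rw [h] at hle1; norm_num at hle1
  obtain ⟨e₁, he₁, e₂, he₂, hne12⟩ := Finset.one_lt_card.mp hcard
  obtain ⟨a, ha1, ha2⟩ := fw_inter hub e₁ he₁ e₂ he₂ hne12
  obtain ⟨b, rfl⟩ := Sym2.mem_iff_exists.mp ha1
  obtain ⟨c, rfl⟩ := Sym2.mem_iff_exists.mp ha2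
  have hAB : G.Adj a b := SimpleGraph.mem_edgeFinset.mp he₁
  have hAC : G.Adj a c := SimpleGraph.mem_edgeFinset.mp he₂
  have hab : a ≠ b := hAB.ne
  have hac : a ≠ c := hAC.ne
  have hbc : b ≠ c := fun hbc => hne12 (by rw [hbc])
  by_cases hBC : G.Adj b c
  · refine ⟨a, b, c, hab, hac, hbc, ?_⟩
    have he₃ : s(b,c) ∈ G.edgeFinset := SimpleGraph.mem_edgeFinset.mpr hBC
    have hmem : ∀ e ∈ G.edgeFinset, ∀ z ∈ e, z ∈ ({a, b, c} : Set V) := by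
      intro e he z hz
      by_contra hzout
      simp only [Set.mem_insert_iff, Set.mem_singleton_iff, not_or] at hzout
      obtain ⟨hza, hzb, hzc⟩ := hzout
      obtain ⟨w, rfl⟩ := Sym2.mem_iff_exists.mp hz
      have hne1 : s(z,w) ≠ s(a,b) := fun hh => by
        have : z ∈ s(a,b) := hh ▸ Sym2.mem_mk_left z w
        rcases Sym2.mem_iff.mp this with h'|h' <;> [exact hza h'; exact hzb h']
      have hne2 : s(z,w) ≠ s(a,c) := fun hh => by
        have : z ∈ s(a,c) := hh ▸ Sym2.mem_mk_left z w
        rcases Sym2.mem_iff.mp this with h'|h' <;> [exact hza h'; exact hzc h']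
      have hne3 : s(z,w) ≠ s(b,c) := fun hh => by
        have : z ∈ s(b,c) := hh ▸ Sym2.mem_mk_left z w
        rcases Sym2.mem_iff.mp this with h'|h' <;> [exact hzb h'; exact hzc h']
      have hw1 : w = a ∨ w = b := by
        obtain ⟨v, hv1, hv2⟩ := fw_inter hub _ he _ he₁ hne1
        rcases Sym2.mem_iff.mp hv1 with rfl|rfl
        · rcases Sym2.mem_iff.mp hv2 with h'|h' <;> [exact absurd h' hza; exact absurd h' hzb]
        · exact Sym2.mem_iff.mp hv2
      have hw2 : w = a ∨ w = c := by
        obtain ⟨v, hv1, hv2⟩ := fw_inter hub _ he _ he₂ hne2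
        rcases Sym2.mem_iff.mp hv1 with rfl|rfl
        · rcases Sym2.mem_iff.mp hv2 with h'|h' <;> [exact absurd h' hza; exact absurd h' hzc]
        · exact Sym2.mem_iff.mp hv2
      have hw3 : w = b ∨ w = c := by
        obtain ⟨v, hv1, hv2⟩ := fw_inter hub _ he _ he₃ hne3
        rcases Sym2.mem_iff.mp hv1 with rfl|rfl
        · rcases Sym2.mem_iff.mp hv2 with h'|h' <;> [exact absurd h' hzb; exact absurd h' hzc]
        · exact Sym2.mem_iff.mp hv2
      rcases hw1 with h1|h1 <;> rcases hw2 with h2|h2 <;> rcases hw3 with h3|h3 <;>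
        simp_all
    intro x y
    constructor
    · intro hxy
      have hexy : s(x,y) ∈ G.edgeFinset := SimpleGraph.mem_edgeFinset.mpr hxy
      exact ⟨hxy.ne, hmem _ hexy x (Sym2.mem_mk_left x y),
        hmem _ hexy y (Sym2.mem_mk_right x y)⟩
    · rintro ⟨hxy, hx, hy⟩
      simp only [Set.mem_insert_iff, Set.mem_singleton_iff] at hx hy
      rcases hx with rfl|rfl|rfl <;> rcases hy with rfl|rfl|rfl <;>
        first
          | exact absurd rfl hxy
          | exact hAB | exact hAB.symm | exact hAC | exact hAC.symm
          | exact hBC | exact hBC.symm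
  · -- star case: every edge contains a, so fracNu ≤ 1, contradiction
    exfalso
    have hall : ∀ e ∈ G.edgeFinset, a ∈ e := by
      intro e he
      by_contra hna
      have hne1 : e ≠ s(a,b) := fun hh => hna (hh ▸ Sym2.mem_mk_left a b)
      have hne2 : e ≠ s(a,c) := fun hh => hna (hh ▸ Sym2.mem_mk_left a c)
      have hb : b ∈ e := by
        obtain ⟨v, hv1, hv2⟩ := fw_inter hub _ he _ he₁ hne1
        rcases Sym2.mem_iff.mp hv2 with rfl|rfl
        · exact absurd hv1 hna
        · exact hv1
      have hc : c ∈ e := by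
        obtain ⟨v, hv1, hv2⟩ := fw_inter hub _ he _ he₂ hne2
        rcases Sym2.mem_iff.mp hv2 with rfl|rfl
        · exact absurd hv1 hna
        · exact hv1
      have : e = s(b,c) := (Sym2.mem_and_mem_iff hbc).mp ⟨hb, hc⟩
      exact hBC (G.mem_edgeSet.mp (this ▸ SimpleGraph.mem_edgeFinset.mp he))
    have hEinc : G.edgeFinset = G.incidenceFinset a := by
      ext e
      rw [SimpleGraph.mem_incidenceFinset]
      constructor
      · intro he; exact ⟨SimpleGraph.mem_edgeFinset.mp he, hall e he⟩
      · intro he; exact SimpleGraph.mem_edgeFinset.mpr he.1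
    have hle1 : G.fracNu ≤ 1 := by
      apply csSup_le hnem
      rintro x ⟨f, hf, rfl⟩
      calc G.fracWeight f = ∑ e ∈ G.incidenceFinset a, f e := by
            rw [SimpleGraph.fracWeight, hEinc]
        _ ≤ 1 := hf.2.2 a
    rw [h] at hle1; norm_num at hle1

end Fwd
theorem stmt_6 {V : Type*} [Fintype V] (G : SimpleGraph V) :
    G.fracNu = 3/2 ↔ ∃ a b c : V, a ≠ b ∧ a ≠ c ∧ b ≠ c ∧
      ∀ x y : V, G.Adj x y ↔
        (x ≠ y ∧ x ∈ ({a, b, c} : Set V) ∧ y ∈ ({a, b, c} : Set V)) := by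
  constructor
  · exact fw_main
  · rintro ⟨a, b, c, hab, hac, hbc, hadj⟩
    apply le_antisymm
    · apply csSup_le ⟨0, aux_nonempty G⟩
      rintro x ⟨f, hf, rfl⟩
      exact tri_upper hab hac hbc hadj hf
    · obtain ⟨f, hf, hw⟩ := tri_lower hab hac hbc hadj
      exact le_csSup (aux_bddAbove G) ⟨f, hf, hw⟩
end

section
/- For a graph G of order n, α'(G) = 5/2 if and only if one of the following holds: (1) C₅ ∪ (n−5)K₁ ⊆ G ⊆ K₅ ∪ (n−5)K₁; (2) C₃ ∪ K₂ ∪ (n−5)K₁ ⊆ G ⊆ K₅ ∪ (n−5)K₁; (3) C₃ ∪ K₂ ∪ (n−5)K₁ ⊆ G ⊆ H, where H is the graph of order n obtained by attaching n−4 pendant edges at one vertex of K₄. -/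
open Finset
open scoped Classical

/-!
Weak LP duality bounds `α'(G)` above by every fractional vertex cover. From below, an injection
`σ` on a vertex set `s` with `v ~ σ v` for all `v ∈ s` (disjoint edges traversed both ways, and
cycles) yields the fractional matching `e ↦ ½ · #{v ∈ s | e = s(v, σ v)}` of weight `|s| / 2`.

Hence `α'(G) = 5/2` rules out three disjoint edges and two disjoint triangles, and forces a `C₅`
or a `C₃ ∪ K₂`: without them, a case analysis around two disjoint edges finds a vertex cover by two
vertices, so `α'(G) ≤ 2`. Ruling out three disjoint edges then confines every edge to the `C₅`, to
the `C₃ ∪ K₂`, or, once an edge leaves the `C₃ ∪ K₂` (necessarily at an end `u` of the `K₂`), to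
the triangle and the edges at `u`. Conversely each family has a fractional vertex cover of weight
`5/2`: `½` on the five vertices, or `1` on `u` and `½` on the triangle.
-/

namespace SimpleGraph

variable {V : Type*} {G : SimpleGraph V} {a b c d e x y z : V}

section Duality

variable [Fintype V]

theorem fracWeight_le_sum_of_cover {f : Sym2 V → ℝ} (hf : G.IsFracMatching f) (w : V → ℝ)
    (hw₀ : ∀ v, 0 ≤ w v) (hw : ∀ x y, G.Adj x y → 1 ≤ w x + w y) :
    G.fracWeight f ≤ ∑ v, w v := by
  obtain ⟨hf01, -, hfv⟩ := hf
  have hedge : ∀ e ∈ G.edgeFinset, f e ≤ ∑ v ∈ univ.filter (· ∈ e), w v * f e := by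
    intro e he
    induction e with
    | h x y =>
      have hxy : G.Adj x y := mem_edgeFinset.1 he
      have : univ.filter (· ∈ s(x, y)) = {x, y} := by ext; simp
      rw [this, sum_pair hxy.ne, ← add_mul]
      exact le_mul_of_one_le_left (hf01 _).1 (hw x y hxy)
  calc G.fracWeight f ≤ ∑ e ∈ G.edgeFinset, ∑ v ∈ univ.filter (· ∈ e), w v * f e :=
        sum_le_sum hedge
    _ = ∑ v, w v * ∑ e ∈ G.incidenceFinset v, f e := by
        simp_rw [sum_filter, mul_sum, incidenceFinset_eq_filter, sum_filter]
        rw [sum_comm]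
    _ ≤ ∑ v, w v := sum_le_sum fun v _ => mul_le_of_le_one_right (hw₀ v) (hfv v)

theorem bddAbove_fracWeights :
    BddAbove {x : ℝ | ∃ f, G.IsFracMatching f ∧ G.fracWeight f = x} := by
  refine ⟨Fintype.card V, ?_⟩
  rintro _ ⟨f, hf, rfl⟩
  simpa using fracWeight_le_sum_of_cover hf (fun _ => 1) (by simp) (by norm_num)

theorem fracWeight_le_fracNu {f : Sym2 V → ℝ} (hf : G.IsFracMatching f) :
    G.fracWeight f ≤ G.fracNu :=
  le_csSup bddAbove_fracWeights ⟨f, hf, rfl⟩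

theorem fracNu_le_sum_of_cover (w : V → ℝ) (hw₀ : ∀ v, 0 ≤ w v)
    (hw : ∀ x y, G.Adj x y → 1 ≤ w x + w y) : G.fracNu ≤ ∑ v, w v := by
  refine csSup_le ⟨0, fun _ => 0, ⟨by simp, fun _ _ => rfl, by simp⟩, by simp [fracWeight]⟩ ?_
  rintro _ ⟨f, hf, rfl⟩
  exact fracWeight_le_sum_of_cover hf w hw₀ hw

theorem fracNu_le_card_add_card_div_two (A B : Finset V)
    (h : ∀ x y, G.Adj x y → x ∈ A ∨ y ∈ A ∨ x ∈ B ∧ y ∈ B) :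
    G.fracNu ≤ #A + #B / 2 := by
  have := fracNu_le_sum_of_cover (G := G)
    (fun v => (if v ∈ A then 1 else 0) + (if v ∈ B then 1 / 2 else 0)) (fun v => by positivity)
    fun x y hxy => by
      rcases h x y hxy with hx | hy | ⟨hx, hy⟩ <;> split_ifs <;> norm_num
  simpa [sum_add_distrib, sum_ite_mem, div_eq_mul_inv] using this

theorem fracNu_le_card_div_two {B : Finset V} (h : ∀ x y, G.Adj x y → x ∈ B ∧ y ∈ B) :
    G.fracNu ≤ #B / 2 := by
  simpa using fracNu_le_card_add_card_div_two ∅ B fun x y hxy => Or.inr (Or.inr (h x y hxy))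

theorem IsVertexCover.fracNu_le_card {A : Finset V} (h : G.IsVertexCover A) :
    G.fracNu ≤ #A := by
  simpa using fracNu_le_card_add_card_div_two A ∅ fun x y hxy => by simpa [or_assoc] using h hxy

theorem IsVertexCover.fracNu_le_two {u v : V} (h : G.IsVertexCover {u, v}) : G.fracNu ≤ 2 :=
  (IsVertexCover.fracNu_le_card (A := {u, v}) (by simpa using h)).trans
    (by exact_mod_cast card_le_two)

end Duality

section HalfMatching

noncomputable def halfMatching (s : Finset V) (σ : V → V) (e : Sym2 V) : ℝ :=
  (#{v ∈ s | s(v, σ v) = e} : ℝ) / 2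

variable {s : Finset V} {σ : V → V}

theorem halfMatching_eq_zero (hadj : ∀ v ∈ s, G.Adj v (σ v)) {e : Sym2 V}
    (he : e ∉ G.edgeSet) : halfMatching s σ e = 0 := by
  simp only [halfMatching, div_eq_zero_iff, Nat.cast_eq_zero, card_eq_zero, filter_eq_empty_iff]
  exact Or.inl fun v hv hve => he (hve ▸ hadj v hv)

variable [Fintype V]

theorem vertexWeight_halfMatching_le_one (hσ : Set.InjOn σ s)
    (hadj : ∀ v ∈ s, G.Adj v (σ v)) (w : V) : G.vertexWeight (halfMatching s σ) w ≤ 1 := by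
  have hfiber : #{v ∈ s | w ∈ s(v, σ v)} =
      ∑ e ∈ G.incidenceFinset w, #{v ∈ s | s(v, σ v) = e} := by
    rw [card_eq_sum_card_fiberwise (f := fun v => s(v, σ v)) (t := G.incidenceFinset w)]
    · refine sum_congr rfl fun e he => ?_
      rw [filter_filter]
      congr 1
      refine filter_congr fun v _ => and_iff_right_of_imp fun h => ?_
      exact h ▸ ((mem_incidenceFinset ..).1 he).2
    · intro v hv
      simp only [coe_filter, Set.mem_ofPred_eq] at hv
      exact (mem_incidenceFinset ..).2 ⟨hadj v hv.1, hv.2⟩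
  have hcard : #{v ∈ s | w ∈ s(v, σ v)} ≤ 2 := calc
    #{v ∈ s | w ∈ s(v, σ v)} = #({v ∈ s | v = w} ∪ {v ∈ s | σ v = w}) := by
        rw [← filter_or]; congr 1 with v; simp [eq_comm]
    _ ≤ #{v ∈ s | v = w} + #{v ∈ s | σ v = w} := card_union_le _ _
    _ ≤ 1 + 1 := by
        gcongr <;> refine card_le_one.2 fun x hx y hy => ?_ <;> simp only [mem_filter] at hx hy
        · exact hx.2.trans hy.2.symm
        · exact hσ hx.1 hy.1 (hx.2.trans hy.2.symm)
  simp only [vertexWeight, halfMatching, ← sum_div]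
  rw [div_le_one two_pos]
  exact_mod_cast hfiber ▸ hcard

theorem isFracMatching_halfMatching (hσ : Set.InjOn σ s) (hadj : ∀ v ∈ s, G.Adj v (σ v)) :
    G.IsFracMatching (halfMatching s σ) := by
  have hvert := vertexWeight_halfMatching_le_one hσ hadj
  refine ⟨fun e => ⟨by unfold halfMatching; positivity, ?_⟩,
    fun e => halfMatching_eq_zero hadj, hvert⟩
  by_cases he : e ∈ G.edgeSet
  · induction e with
    | h x y =>
      refine le_trans ?_ (hvert x)
      exact single_le_sum (fun _ _ => by unfold halfMatching; positivity)
        ((mem_incidenceFinset ..).2 ⟨he, Sym2.mem_mk_left x y⟩)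
  · exact (halfMatching_eq_zero hadj he).le.trans zero_le_one

theorem fracWeight_halfMatching (hadj : ∀ v ∈ s, G.Adj v (σ v)) :
    G.fracWeight (halfMatching s σ) = #s / 2 := by
  simp only [fracWeight, halfMatching, ← sum_div]
  rw [card_eq_sum_card_fiberwise (f := fun v => s(v, σ v)) fun v hv => mem_edgeFinset.2 (hadj v hv)]
  push_cast
  rfl

theorem card_div_two_le_fracNu (hσ : Set.InjOn σ s) (hadj : ∀ v ∈ s, G.Adj v (σ v)) :
    (#s : ℝ) / 2 ≤ G.fracNu :=
  fracWeight_halfMatching hadj ▸ fracWeight_le_fracNu (isFracMatching_halfMatching hσ hadj)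

theorem length_div_two_le_fracNu {l : List V} (hl : l.Nodup) (σ : Equiv.Perm V)
    (hadj : ∀ v ∈ l, G.Adj v (σ v)) : (l.length : ℝ) / 2 ≤ G.fracNu := by
  simpa [List.toFinset_card_of_nodup hl] using
    card_div_two_le_fracNu (s := l.toFinset) σ.injective.injOn (by simpa using hadj)

end HalfMatching

def HasPentagon (G : SimpleGraph V) : Prop :=
  ∃ a b c d e : V, ([a, b, c, d, e] : List V).Nodup ∧
    G.Adj a b ∧ G.Adj b c ∧ G.Adj c d ∧ G.Adj d e ∧ G.Adj e a

def HasTriangleAndEdge (G : SimpleGraph V) : Prop :=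
  ∃ a b c d e : V, ([a, b, c, d, e] : List V).Nodup ∧
    G.Adj a b ∧ G.Adj b c ∧ G.Adj a c ∧ G.Adj d e

section Configurations

variable [Fintype V]

theorem three_le_fracNu_of_disjoint_edges (hl : [a, b, c, d, x, y].Nodup) (hab : G.Adj a b)
    (hcd : G.Adj c d) (hxy : G.Adj x y) : 3 ≤ G.fracNu := by
  have := length_div_two_le_fracNu (G := G) hl (Equiv.swap a b * Equiv.swap c d * Equiv.swap x y)
    (by
      simp only [List.nodup_cons, List.mem_cons, List.not_mem_nil, or_false, not_or] at hl
      intro v hv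
      simp only [List.mem_cons, List.not_mem_nil, or_false] at hv
      rcases hv with rfl | rfl | rfl | rfl | rfl | rfl <;>
        simp [Equiv.swap_apply_of_ne_of_ne, Ne.symm, hl, hab, hcd, hxy, hab.symm, hcd.symm,
          hxy.symm])
  norm_num at this
  exact this

theorem three_le_fracNu_of_disjoint_triangles (hl : [a, b, c, x, y, z].Nodup) (hab : G.Adj a b)
    (hbc : G.Adj b c) (hac : G.Adj a c) (hxy : G.Adj x y) (hyz : G.Adj y z) (hxz : G.Adj x z) :
    3 ≤ G.fracNu := by
  have := length_div_two_le_fracNu (G := G) hl ([a, b, c].formPerm * [x, y, z].formPerm) (by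
    simp only [List.nodup_cons, List.mem_cons, List.not_mem_nil, or_false, not_or] at hl
    intro v hv
    simp only [List.mem_cons, List.not_mem_nil, or_false] at hv
    rcases hv with rfl | rfl | rfl | rfl | rfl | rfl <;>
      simp [Equiv.swap_apply_of_ne_of_ne, Ne.symm, hl, hab, hbc, hac.symm, hxy, hyz, hxz.symm])
  norm_num at this
  exact this

theorem HasPentagon.five_div_two_le_fracNu (h : G.HasPentagon) : 5 / 2 ≤ G.fracNu := by
  obtain ⟨a, b, c, d, e, hl, hab, hbc, hcd, hde, hea⟩ := h
  have := length_div_two_le_fracNu (G := G) hl [a, b, c, d, e].formPerm (by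
    simp only [List.nodup_cons, List.mem_cons, List.not_mem_nil, or_false, not_or] at hl
    intro v hv
    simp only [List.mem_cons, List.not_mem_nil, or_false] at hv
    rcases hv with rfl | rfl | rfl | rfl | rfl <;>
      simp [Equiv.swap_apply_of_ne_of_ne, Ne.symm, hl, hab, hbc, hcd, hde, hea])
  norm_num at this
  exact this

theorem HasTriangleAndEdge.five_div_two_le_fracNu (h : G.HasTriangleAndEdge) :
    5 / 2 ≤ G.fracNu := by
  obtain ⟨a, b, c, d, e, hl, hab, hbc, hac, hde⟩ := h
  have := length_div_two_le_fracNu (G := G) hl ([a, b, c].formPerm * Equiv.swap d e) (by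
    simp only [List.nodup_cons, List.mem_cons, List.not_mem_nil, or_false, not_or] at hl
    intro v hv
    simp only [List.mem_cons, List.not_mem_nil, or_false] at hv
    rcases hv with rfl | rfl | rfl | rfl | rfl <;>
      simp [Equiv.swap_apply_of_ne_of_ne, Ne.symm, hl, hab, hbc, hac.symm, hde, hde.symm])
  norm_num at this
  exact this

end Configurations

section FracNuLtThree

theorem isVertexCover_pair_of_neighbors (hQ : G.IsVertexCover {a, b, c, d})
    (hb : ∀ y, G.Adj b y → y = a ∨ y = c) (hd : ∀ y, G.Adj d y → y = a ∨ y = c) :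
    G.IsVertexCover {a, c} := by
  intro y z hyz
  have := hb y; have := hb z; have := hd y; have := hd z
  have := hQ hyz
  grind [adj_comm]

variable [Fintype V]

theorem not_nodup_edges_of_fracNu_lt_three (h3 : G.fracNu < 3) (hab : G.Adj a b) (hcd : G.Adj c d)
    (hxy : G.Adj x y) : ¬[a, b, c, d, x, y].Nodup :=
  fun hl => (three_le_fracNu_of_disjoint_edges hl hab hcd hxy).not_gt h3

theorem not_nodup_triangles_of_fracNu_lt_three (h3 : G.fracNu < 3) (hab : G.Adj a b)
    (hbc : G.Adj b c) (hac : G.Adj a c) (hxy : G.Adj x y) (hyz : G.Adj y z) (hxz : G.Adj x z) :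
    ¬[a, b, c, x, y, z].Nodup :=
  fun hl => (three_le_fracNu_of_disjoint_triangles hl hab hbc hac hxy hyz hxz).not_gt h3

theorem isVertexCover_of_fracNu_lt_three (h3 : G.fracNu < 3) (hl : [a, b, c, d].Nodup)
    (hab : G.Adj a b) (hcd : G.Adj c d) : G.IsVertexCover {a, b, c, d} := by
  intro x y hxy
  by_contra! h
  have := hxy.ne
  exact not_nodup_edges_of_fracNu_lt_three h3 hab hcd hxy (by grind)

theorem neighbor_mem_of_adj_outside (h3 : G.fracNu < 3) (hK : ¬G.HasTriangleAndEdge)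
    (hl : [a, b, c, d, x].Nodup) (hab : G.Adj a b) (hcd : G.Adj c d) (hax : G.Adj a x)
    (hby : G.Adj b y) : y = a ∨ y = c ∨ y = d := by
  by_contra! hy
  have := hby.ne
  obtain rfl | hxy := eq_or_ne x y
  · exact hK ⟨a, b, x, c, d, by grind, hab, hby, hax, hcd⟩
  · exact not_nodup_edges_of_fracNu_lt_three h3 hax hby hcd (by grind)

theorem isVertexCover_pair_of_adj_outside (h3 : G.fracNu < 3) (hC5 : ¬G.HasPentagon)
    (hK : ¬G.HasTriangleAndEdge) (hl : [a, b, c, d, x].Nodup) (hab : G.Adj a b)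
    (hcd : G.Adj c d) (hax : G.Adj a x) (hy : y ∉ [a, b, c, d]) (hcy : G.Adj c y) :
    G.IsVertexCover {a, c} := by
  have := hcy.ne
  have hbd : ¬G.Adj b d := by
    intro hbd
    obtain rfl | hxy := eq_or_ne x y
    · exact hC5 ⟨a, b, d, c, x, by grind, hab, hbd, hcd.symm, hcy, hax.symm⟩
    · exact not_nodup_edges_of_fracNu_lt_three h3 hax hcy hbd (by grind)
  have hd : ∀ z, G.Adj d z → z = a ∨ z = b ∨ z = c := by
    intro z hdz
    by_contra! hz
    have := hdz.ne
    obtain rfl | hyz := eq_or_ne y z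
    · exact hK ⟨c, d, y, a, b, by grind, hcd, hdz, hcy, hab⟩
    · exact not_nodup_edges_of_fracNu_lt_three h3 hab hcy hdz (by grind)
  refine isVertexCover_pair_of_neighbors
    (isVertexCover_of_fracNu_lt_three h3 (by grind) hab hcd) (fun z hbz => ?_) (fun z hdz => ?_)
  · have := neighbor_mem_of_adj_outside h3 hK hl hab hcd hax hbz
    grind
  · have := hd z hdz
    grind [adj_comm]

theorem exists_isVertexCover_pair (h3 : G.fracNu < 3) (hC5 : ¬G.HasPentagon)
    (hK : ¬G.HasTriangleAndEdge) (hl : [a, b, c, d, x].Nodup) (hab : G.Adj a b)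
    (hcd : G.Adj c d) (hax : G.Adj a x) : ∃ u v, G.IsVertexCover {u, v} := by
  by_cases hc : ∃ y ∉ [a, b, c, d], G.Adj c y
  · obtain ⟨y, hy, hcy⟩ := hc
    exact ⟨a, c, isVertexCover_pair_of_adj_outside h3 hC5 hK hl hab hcd hax hy hcy⟩
  by_cases hd : ∃ y ∉ [a, b, c, d], G.Adj d y
  · obtain ⟨y, hy, hdy⟩ := hd
    exact ⟨a, d, isVertexCover_pair_of_adj_outside h3 hC5 hK (by grind) hab hcd.symm hax
      (by grind) hdy⟩
  push Not at hc hd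
  have hQ := isVertexCover_of_fracNu_lt_three h3 (by grind) hab hcd
  by_cases hbc : G.Adj b c
  · have hbd : ¬G.Adj b d := fun hbd =>
      hK ⟨b, c, d, a, x, by grind, hbc, hcd, hbd, hax⟩
    refine ⟨a, c, isVertexCover_pair_of_neighbors hQ (fun z hbz => ?_) (fun z hdz => ?_)⟩
    · have := neighbor_mem_of_adj_outside h3 hK hl hab hcd hax hbz
      grind
    · have := hd z; have := hdz.ne
      grind [adj_comm]
  · rw [Set.pair_comm] at hQ
    refine ⟨a, d, isVertexCover_pair_of_neighbors hQ (fun z hbz => ?_) (fun z hcz => ?_)⟩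
    · have := neighbor_mem_of_adj_outside h3 hK hl hab hcd hax hbz
      grind
    · have := hc z; have := hcz.ne
      grind [adj_comm]

theorem fracNu_le_two_of_lt_three (h3 : G.fracNu < 3) (hC5 : ¬G.HasPentagon)
    (hK : ¬G.HasTriangleAndEdge) : G.fracNu ≤ 2 := by
  by_cases h2 : ∃ a b c d, [a, b, c, d].Nodup ∧ G.Adj a b ∧ G.Adj c d
  · obtain ⟨a, b, c, d, hl, hab, hcd⟩ := h2
    by_cases hin : ∀ x y, G.Adj x y → x ∈ ({a, b, c, d} : Finset V) ∧ y ∈ ({a, b, c, d} : Finset V)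
    · have : (#({a, b, c, d} : Finset V) : ℝ) ≤ 4 := by exact_mod_cast card_le_four
      linarith [fracNu_le_card_div_two hin]
    have hQ := isVertexCover_of_fracNu_lt_three h3 hl hab hcd
    obtain ⟨w, z, hwz, hw, hz⟩ : ∃ w z, G.Adj w z ∧ w ∈ [a, b, c, d] ∧ z ∉ [a, b, c, d] := by
      push Not at hin
      obtain ⟨x, y, hxy, hx⟩ := hin
      have := hQ hxy
      by_cases hy : y ∈ [a, b, c, d]
      · exact ⟨y, x, hxy.symm, hy, by grind⟩
      · exact ⟨x, y, hxy, by grind, hy⟩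
    have := hwz.ne
    obtain ⟨u, v, huv⟩ : ∃ u v, G.IsVertexCover {u, v} := by
      simp only [List.mem_cons, List.not_mem_nil, or_false] at hw
      rcases hw with rfl | rfl | rfl | rfl
      · exact exists_isVertexCover_pair h3 hC5 hK (by grind) hab hcd hwz
      · exact exists_isVertexCover_pair h3 hC5 hK (by grind) hab.symm hcd hwz
      · exact exists_isVertexCover_pair h3 hC5 hK (by grind) hcd hab hwz
      · exact exists_isVertexCover_pair h3 hC5 hK (by grind) hcd.symm hab hwz
    exact huv.fracNu_le_two
  · by_cases hE : ∃ a b, G.Adj a b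
    · obtain ⟨a, b, hab⟩ := hE
      refine IsVertexCover.fracNu_le_two (u := a) (v := b) fun x y hxy => ?_
      have := hab.ne; have := hxy.ne
      by_contra! hxy'
      exact h2 ⟨a, b, x, y, by grind, hab, hxy⟩
    · push Not at hE
      exact (IsVertexCover.fracNu_le_card (A := ∅) fun x y hxy => (hE x y hxy).elim).trans
        (by simp)

theorem mem_of_adj_of_pentagon (h3 : G.fracNu < 3) (hl : [a, b, c, d, e].Nodup)
    (hab : G.Adj a b) (hbc : G.Adj b c) (hcd : G.Adj c d) (hde : G.Adj d e) (hea : G.Adj e a)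
    (hxy : G.Adj x y) : x ∈ [a, b, c, d, e] := by
  by_contra hx
  have := hxy.ne
  by_cases hy : y ∈ [a, b, c, d, e]
  · simp only [List.mem_cons, List.not_mem_nil, or_false] at hy
    rcases hy with rfl | rfl | rfl | rfl | rfl
    · exact not_nodup_edges_of_fracNu_lt_three h3 hxy hbc hde (by grind)
    · exact not_nodup_edges_of_fracNu_lt_three h3 hxy hcd hea (by grind)
    · exact not_nodup_edges_of_fracNu_lt_three h3 hxy hde hab (by grind)
    · exact not_nodup_edges_of_fracNu_lt_three h3 hxy hea hbc (by grind)
    · exact not_nodup_edges_of_fracNu_lt_three h3 hxy hab hcd (by grind)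
  · exact not_nodup_edges_of_fracNu_lt_three h3 hxy hab hcd (by grind)

theorem HasPentagon.exists_card_eq_five_forall_adj_mem (h : G.HasPentagon) (h3 : G.fracNu < 3) :
    ∃ A : Finset V, #A = 5 ∧ ∀ x y, G.Adj x y → x ∈ A ∧ y ∈ A := by
  obtain ⟨a, b, c, d, e, hl, hab, hbc, hcd, hde, hea⟩ := h
  refine ⟨[a, b, c, d, e].toFinset, List.toFinset_card_of_nodup hl, fun x y hxy => ?_⟩
  simp only [List.mem_toFinset]
  exact ⟨mem_of_adj_of_pentagon h3 hl hab hbc hcd hde hea hxy,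
    mem_of_adj_of_pentagon h3 hl hab hbc hcd hde hea hxy.symm⟩

theorem adj_eq_or_mem_of_triangle_of_adj_outside (h3 : G.fracNu < 3)
    (hl : [a, b, c, d, e, x].Nodup) (hab : G.Adj a b) (hbc : G.Adj b c) (hac : G.Adj a c)
    (hde : G.Adj d e) (hdx : G.Adj d x) (hyz : G.Adj y z) :
    (y ∈ ({d, a, b, c} : Set V) ∧ z ∈ ({d, a, b, c} : Set V)) ∨ y = d ∨ z = d := by
  have htri : ∀ {w z}, G.Adj w z → w ∈ [a, b, c] → z ∈ [a, b, c, d] := by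
    intro w z hwz hw
    by_contra hz
    have := hwz.ne
    simp only [List.mem_cons, List.not_mem_nil, or_false] at hw
    rcases hw with rfl | rfl | rfl <;> obtain rfl | hzx := eq_or_ne z x
    · exact not_nodup_edges_of_fracNu_lt_three h3 hwz hbc hde (by grind)
    · exact not_nodup_edges_of_fracNu_lt_three h3 hwz hbc hdx (by grind)
    · exact not_nodup_edges_of_fracNu_lt_three h3 hwz hac hde (by grind)
    · exact not_nodup_edges_of_fracNu_lt_three h3 hwz hac hdx (by grind)
    · exact not_nodup_edges_of_fracNu_lt_three h3 hwz hab hde (by grind)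
    · exact not_nodup_edges_of_fracNu_lt_three h3 hwz hab hdx (by grind)
  have hpend : ∀ {z}, G.Adj e z → z ∉ [a, b, c, d] → False := by
    intro z hez hz
    have := hez.ne
    obtain rfl | hzx := eq_or_ne z x
    · exact not_nodup_triangles_of_fracNu_lt_three h3 hab hbc hac hde hez hdx (by grind)
    · exact not_nodup_edges_of_fracNu_lt_three h3 hez hdx hab (by grind)
  have hout : ∀ {w z}, G.Adj w z → w ∉ [a, b, c, d] → z ∉ [a, b, c, d] → False := by
    intro w z hwz hw hz
    have := hwz.ne
    by_cases hwe : w = e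
    · exact hpend (hwe ▸ hwz) hz
    by_cases hze : z = e
    · exact hpend (hze ▸ hwz.symm) hw
    exact not_nodup_edges_of_fracNu_lt_three h3 hwz hde hab (by grind)
  have := htri hyz; have := htri hyz.symm; have := @hout y z hyz
  grind

theorem exists_pendant_cover (h3 : G.fracNu < 3) (hl : [a, b, c, d, e].Nodup)
    (hab : G.Adj a b) (hbc : G.Adj b c) (hac : G.Adj a c) (hde : G.Adj d e)
    (hout : ¬∀ x y, G.Adj x y → x ∈ [a, b, c, d, e] ∧ y ∈ [a, b, c, d, e]) :
    ∃ u p q r : V, [u, p, q, r].Nodup ∧ ∀ x y, G.Adj x y →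
      (x ∈ ({u, p, q, r} : Set V) ∧ y ∈ ({u, p, q, r} : Set V)) ∨ x = u ∨ y = u := by
  obtain ⟨w, x, hwx, hw, hx⟩ : ∃ w x, G.Adj w x ∧ w ∈ [a, b, c, d, e] ∧ x ∉ [a, b, c, d, e] := by
    push Not at hout
    obtain ⟨x, y, hxy, hx⟩ := hout
    by_cases hy : y ∈ [a, b, c, d, e]
    · exact ⟨y, x, hxy.symm, hy, by grind⟩
    by_cases hx' : x ∈ [a, b, c, d, e]
    · exact ⟨x, y, hxy, hx', hy⟩
    have := hxy.ne
    exact (not_nodup_edges_of_fracNu_lt_three h3 hxy hab hde (by grind)).elim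
  have := hwx.ne
  simp only [List.mem_cons, List.not_mem_nil, or_false] at hw
  rcases hw with rfl | rfl | rfl | rfl | rfl
  · exact (not_nodup_edges_of_fracNu_lt_three h3 hwx hbc hde (by grind)).elim
  · exact (not_nodup_edges_of_fracNu_lt_three h3 hwx hac hde (by grind)).elim
  · exact (not_nodup_edges_of_fracNu_lt_three h3 hwx hab hde (by grind)).elim
  · exact ⟨w, a, b, c, by grind, fun _ _ hyz =>
      adj_eq_or_mem_of_triangle_of_adj_outside h3 (by grind) hab hbc hac hde hwx hyz⟩
  · exact ⟨w, a, b, c, by grind, fun _ _ hyz =>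
      adj_eq_or_mem_of_triangle_of_adj_outside h3 (by grind) hab hbc hac hde.symm hwx hyz⟩

theorem HasTriangleAndEdge.exists_card_eq_five_forall_adj_mem_or_pendant
    (h : G.HasTriangleAndEdge) (h3 : G.fracNu < 3) :
    (∃ A : Finset V, #A = 5 ∧ ∀ x y, G.Adj x y → x ∈ A ∧ y ∈ A) ∨
      ∃ u p q r : V, [u, p, q, r].Nodup ∧ ∀ x y, G.Adj x y →
        (x ∈ ({u, p, q, r} : Set V) ∧ y ∈ ({u, p, q, r} : Set V)) ∨ x = u ∨ y = u := by
  obtain ⟨a, b, c, d, e, hl, hab, hbc, hac, hde⟩ := h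
  by_cases hin : ∀ x y, G.Adj x y → x ∈ [a, b, c, d, e] ∧ y ∈ [a, b, c, d, e]
  · exact Or.inl ⟨[a, b, c, d, e].toFinset, List.toFinset_card_of_nodup hl, by simpa using hin⟩
  · exact Or.inr (exists_pendant_cover h3 hl hab hbc hac hde hin)

end FracNuLtThree

section FiveHalves

variable [Fintype V]

theorem fracNu_eq_five_div_two_of_forall_adj_mem {A : Finset V} (hA : #A = 5)
    (hin : ∀ x y, G.Adj x y → x ∈ A ∧ y ∈ A) (h : G.HasPentagon ∨ G.HasTriangleAndEdge) :
    G.fracNu = 5 / 2 := by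
  have := fracNu_le_card_div_two hin
  rw [hA] at this
  rcases h with h | h
  · linarith [h.five_div_two_le_fracNu]
  · linarith [h.five_div_two_le_fracNu]

theorem fracNu_eq_five_div_two_of_pendant {u p q r : V}
    (hcov : ∀ x y, G.Adj x y →
      (x ∈ ({u, p, q, r} : Set V) ∧ y ∈ ({u, p, q, r} : Set V)) ∨ x = u ∨ y = u)
    (hK : G.HasTriangleAndEdge) : G.fracNu = 5 / 2 := by
  have hup := fracNu_le_card_add_card_div_two {u} {p, q, r} fun x y hxy => by
    have := hcov x y hxy
    grind
  have : (#({p, q, r} : Finset V) : ℝ) ≤ 3 := by exact_mod_cast card_le_three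
  rw [card_singleton, Nat.cast_one] at hup
  linarith [hK.five_div_two_le_fracNu]

end FiveHalves

end SimpleGraph

theorem stmt_8 {V : Type*} [Fintype V] (G : SimpleGraph V) :
    G.fracNu = 5/2 ↔
      ((∃ A : Finset V, A.card = 5 ∧ (∀ x y : V, G.Adj x y → x ∈ A ∧ y ∈ A) ∧
        ∃ a b c d e : V, ([a, b, c, d, e] : List V).Nodup ∧
          G.Adj a b ∧ G.Adj b c ∧ G.Adj c d ∧ G.Adj d e ∧ G.Adj e a) ∨
      (∃ A : Finset V, A.card = 5 ∧ (∀ x y : V, G.Adj x y → x ∈ A ∧ y ∈ A) ∧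
        ∃ a b c d e : V, ([a, b, c, d, e] : List V).Nodup ∧
          G.Adj a b ∧ G.Adj b c ∧ G.Adj a c ∧ G.Adj d e) ∨
      (∃ u p q r : V, ([u, p, q, r] : List V).Nodup ∧
        (∀ x y : V, G.Adj x y →
          (x ∈ ({u, p, q, r} : Set V) ∧ y ∈ ({u, p, q, r} : Set V)) ∨ x = u ∨ y = u) ∧
        ∃ a b c d e : V, ([a, b, c, d, e] : List V).Nodup ∧
          G.Adj a b ∧ G.Adj b c ∧ G.Adj a c ∧ G.Adj d e)) := by
  constructor
  · intro h
    have h3 : G.fracNu < 3 := by linarith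
    by_cases hC5 : G.HasPentagon
    · obtain ⟨A, hA, hin⟩ := hC5.exists_card_eq_five_forall_adj_mem h3
      exact Or.inl ⟨A, hA, hin, hC5⟩
    by_cases hK : G.HasTriangleAndEdge
    · rcases hK.exists_card_eq_five_forall_adj_mem_or_pendant h3 with
        ⟨A, hA, hin⟩ | ⟨u, p, q, r, hl, hcov⟩
      · exact Or.inr (Or.inl ⟨A, hA, hin, hK⟩)
      · exact Or.inr (Or.inr ⟨u, p, q, r, hl, hcov, hK⟩)
    linarith [SimpleGraph.fracNu_le_two_of_lt_three h3 hC5 hK]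
  · rintro (⟨A, hA, hin, hC5⟩ | ⟨A, hA, hin, hK⟩ | ⟨u, p, q, r, -, hcov, hK⟩)
    · exact SimpleGraph.fracNu_eq_five_div_two_of_forall_adj_mem hA hin (Or.inl hC5)
    · exact SimpleGraph.fracNu_eq_five_div_two_of_forall_adj_mem hA hin (Or.inr hK)
    · exact SimpleGraph.fracNu_eq_five_div_two_of_pendant hcov hK
end

section
/- Let G be a graph of order n ≥ 6 with α'(G) = 3/2. Then α'(G) + α'(complement of G) = (n+3)/2. -/
open Finset
open scoped Classical

noncomputable section
namespace FracAux
open SimpleGraph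

variable {V : Type*} [Fintype V]

lemma incidenceFinset_eq_image (G : SimpleGraph V) (v : V) :
    G.incidenceFinset v = (G.neighborFinset v).image (fun w => s(v, w)) := by
  classical
  ext e
  induction e with
  | _ x y =>
    simp only [mem_incidenceFinset, Finset.mem_image, mem_neighborFinset,
      mk'_mem_incidenceSet_iff]
    constructor
    · rintro ⟨hadj, h | h⟩
      · subst h; exact ⟨y, hadj, rfl⟩
      · subst h; exact ⟨x, hadj.symm, Sym2.eq_swap⟩
    · rintro ⟨w, hw, he⟩
      rw [Sym2.eq_iff] at he
      rcases he with ⟨hv, hw'⟩ | ⟨hv, hw'⟩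
      · subst hv; subst hw'; exact ⟨hw, Or.inl rfl⟩
      · subst hv; subst hw'; exact ⟨hw.symm, Or.inr rfl⟩

lemma sum_incidence (G : SimpleGraph V) (f : Sym2 V → ℝ) (v : V) :
    ∑ e ∈ G.incidenceFinset v, f e = ∑ w ∈ G.neighborFinset v, f s(v, w) := by
  rw [incidenceFinset_eq_image, Finset.sum_image]
  intro x _ y _ h
  exact Sym2.congr_right.mp h

lemma sum_incidence_erase (G : SimpleGraph V) (f : Sym2 V → ℝ) (v : V)
    (h0 : ∀ w, w ≠ v → ¬ G.Adj v w → f s(v, w) = 0) :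
    ∑ e ∈ G.incidenceFinset v, f e = ∑ w ∈ Finset.univ.erase v, f s(v, w) := by
  rw [sum_incidence]
  apply Finset.sum_subset
  · intro w hw
    exact Finset.mem_erase.mpr ⟨((mem_neighborFinset _ _ _).mp hw).ne', Finset.mem_univ w⟩
  · intro w hw hnb
    refine h0 w (Finset.mem_erase.mp hw).1 fun hadj => hnb ?_
    exact (mem_neighborFinset _ _ _).mpr hadj

lemma card_filter_mem (G : SimpleGraph V) {e : Sym2 V} (he : e ∈ G.edgeFinset) :
    (Finset.univ.filter (fun v : V => v ∈ e)).card = 2 := by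
  classical
  induction e with
  | _ x y =>
    have hxy : x ≠ y := by
      have := SimpleGraph.not_isDiag_of_mem_edgeFinset he
      simpa [Sym2.mk_isDiag_iff] using this
    have : (Finset.univ.filter (fun v : V => v ∈ s(x, y))) = {x, y} := by
      ext z; simp [Sym2.mem_iff]
    rw [this, Finset.card_insert_of_notMem (by simpa using hxy), Finset.card_singleton]

lemma sum_vertexWeight (G : SimpleGraph V) (f : Sym2 V → ℝ) :
    ∑ v, G.vertexWeight f v = 2 * G.fracWeight f := by
  classical
  simp only [SimpleGraph.vertexWeight, SimpleGraph.fracWeight]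
  calc ∑ v, ∑ e ∈ G.incidenceFinset v, f e
      = ∑ v : V, ∑ e ∈ G.edgeFinset, if v ∈ e then f e else 0 := by
        refine Finset.sum_congr rfl fun v _ => ?_
        rw [SimpleGraph.incidenceFinset_eq_filter, Finset.sum_filter]
    _ = ∑ e ∈ G.edgeFinset, ∑ v : V, if v ∈ e then f e else 0 := Finset.sum_comm
    _ = ∑ e ∈ G.edgeFinset, 2 * f e := by
        refine Finset.sum_congr rfl fun e he => ?_
        rw [← Finset.sum_filter, Finset.sum_const, card_filter_mem G he]
        simp [mul_comm]
    _ = 2 * ∑ e ∈ G.edgeFinset, f e := by rw [Finset.mul_sum]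

lemma zero_mem_S (G : SimpleGraph V) :
    (0 : ℝ) ∈ {x : ℝ | ∃ f, G.IsFracMatching f ∧ G.fracWeight f = x} := by
  refine ⟨fun _ => 0, ⟨fun e => ⟨le_rfl, zero_le_one⟩, fun _ _ => rfl, fun v => by simp⟩, ?_⟩
  simp [SimpleGraph.fracWeight]

lemma weight_le_half (G : SimpleGraph V) {f : Sym2 V → ℝ} (hf : G.IsFracMatching f) :
    G.fracWeight f ≤ (Fintype.card V : ℝ) / 2 := by
  have h1 : ∑ v, G.vertexWeight f v ≤ (Fintype.card V : ℝ) := by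
    calc ∑ v, G.vertexWeight f v ≤ ∑ _v : V, (1:ℝ) :=
          Finset.sum_le_sum fun v _ => hf.2.2 v
      _ = (Fintype.card V : ℝ) := by simp
  have h2 := sum_vertexWeight G f
  linarith

lemma bddAbove_S (G : SimpleGraph V) :
    BddAbove {x : ℝ | ∃ f, G.IsFracMatching f ∧ G.fracWeight f = x} := by
  refine ⟨(Fintype.card V : ℝ) / 2, ?_⟩
  rintro x ⟨f, hf, rfl⟩
  exact weight_le_half G hf

lemma le_fracNu (G : SimpleGraph V) {f : Sym2 V → ℝ} (hf : G.IsFracMatching f) :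
    G.fracWeight f ≤ G.fracNu :=
  le_csSup (bddAbove_S G) ⟨f, hf, rfl⟩

lemma fracNu_le_half (G : SimpleGraph V) : G.fracNu ≤ (Fintype.card V : ℝ) / 2 := by
  refine csSup_le ⟨0, zero_mem_S G⟩ ?_
  rintro x ⟨f, hf, rfl⟩
  exact weight_le_half G hf


variable {G : SimpleGraph V}

lemma intersecting (h : G.fracNu = 3/2) :
    ∀ x y z w, G.Adj x y → G.Adj z w → x = z ∨ x = w ∨ y = z ∨ y = w := by
  intro x y z w hxy hzw
  by_contra hc
  push_neg at hc
  obtain ⟨h1, h2, h3, h4⟩ := hc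
  set e₁ : Sym2 V := s(x, y) with he₁
  set e₂ : Sym2 V := s(z, w) with he₂
  have hne : e₁ ≠ e₂ := by
    intro hh
    rw [he₁, he₂, Sym2.eq_iff] at hh
    rcases hh with ⟨rfl, rfl⟩ | ⟨rfl, rfl⟩ <;> simp_all
  set f : Sym2 V → ℝ :=
    fun e => (if e = e₁ then (1:ℝ) else 0) + (if e = e₂ then (1:ℝ) else 0) with hfdef
  have hsum : ∀ s : Finset (Sym2 V), ∑ e ∈ s, f e =
      (if e₁ ∈ s then (1:ℝ) else 0) + (if e₂ ∈ s then (1:ℝ) else 0) := by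
    intro s
    rw [hfdef, Finset.sum_add_distrib, Finset.sum_ite_eq' s e₁ (fun _ => (1:ℝ)),
      Finset.sum_ite_eq' s e₂ (fun _ => (1:ℝ))]
  have hmatch : G.IsFracMatching f := by
    refine ⟨fun e => ⟨?_, ?_⟩, fun e he => ?_, fun v => ?_⟩
    · rw [hfdef]; positivity
    · rw [hfdef]
      by_cases ha : e = e₁ <;> by_cases hb : e = e₂
      · exact absurd (ha.symm.trans hb) hne
      · simp [ha, hb, hne]
      · simp [ha, hb, Ne.symm hne]
      · simp [ha, hb]
    · have ha : e ≠ e₁ := fun hh => he (hh ▸ (by rw [he₁, SimpleGraph.mem_edgeSet]; exact hxy))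
      have hb : e ≠ e₂ := fun hh => he (hh ▸ (by rw [he₂, SimpleGraph.mem_edgeSet]; exact hzw))
      simp [hfdef, ha, hb]
    · rw [hsum]
      have hnot : ¬(e₁ ∈ G.incidenceFinset v ∧ e₂ ∈ G.incidenceFinset v) := by
        rintro ⟨m1, m2⟩
        rw [mem_incidenceFinset] at m1 m2
        have hv1 : v ∈ e₁ := m1.2
        have hv2 : v ∈ e₂ := m2.2
        rw [he₁, Sym2.mem_iff] at hv1
        rw [he₂, Sym2.mem_iff] at hv2
        rcases hv1 with rfl | rfl <;> rcases hv2 with rfl | rfl <;> simp_all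
      by_cases m1 : e₁ ∈ G.incidenceFinset v <;> by_cases m2 : e₂ ∈ G.incidenceFinset v <;>
        simp_all
  have hw2 : G.fracWeight f = 2 := by
    rw [SimpleGraph.fracWeight, hsum]
    have m1 : e₁ ∈ G.edgeFinset := by rw [he₁, SimpleGraph.mem_edgeFinset]; exact hxy
    have m2 : e₂ ∈ G.edgeFinset := by rw [he₂, SimpleGraph.mem_edgeFinset]; exact hzw
    simp [m1, m2]
    norm_num
  have := le_fracNu G hmatch
  rw [hw2, h] at this
  linarith


lemma common_vertex_absurd (v : V) (hall : ∀ z w, G.Adj z w → z = v ∨ w = v)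
    {f₀ : Sym2 V → ℝ} (hf₀ : G.IsFracMatching f₀) (hw : 1 < G.fracWeight f₀) : False := by
  have hE : G.edgeFinset = G.incidenceFinset v := by
    ext e
    induction e with
    | _ x y =>
      rw [SimpleGraph.mem_edgeFinset, mem_incidenceFinset, mk'_mem_incidenceSet_iff,
        SimpleGraph.mem_edgeSet]
      constructor
      · intro hadj
        refine ⟨hadj, ?_⟩
        rcases hall x y hadj with rfl | rfl
        · exact Or.inl rfl
        · exact Or.inr rfl
      · exact And.left
  have : G.fracWeight f₀ ≤ 1 := by
    rw [SimpleGraph.fracWeight, hE]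
    exact hf₀.2.2 v
  linarith

lemma exists_triangle_struct (h : G.fracNu = 3/2) :
    ∃ a b c : V, a ≠ b ∧ a ≠ c ∧ b ≠ c ∧
      ∀ x y, G.Adj x y → (x = a ∨ x = b ∨ x = c) ∧ (y = a ∨ y = b ∨ y = c) := by
  have hint := intersecting h
  have hlt : (1:ℝ) < G.fracNu := by rw [h]; norm_num
  obtain ⟨xx, hxxS, hxx⟩ := exists_lt_of_lt_csSup ⟨0, zero_mem_S G⟩ hlt
  obtain ⟨f₀, hf₀, rfl⟩ := hxxS
  have hedge : ∃ x y, G.Adj x y := by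
    by_contra hno
    push_neg at hno
    have hE : G.edgeFinset = ∅ := by
      ext e
      induction e with
      | _ x y => simp [SimpleGraph.mem_edgeFinset, hno]
    have : G.fracWeight f₀ = 0 := by rw [SimpleGraph.fracWeight, hE]; simp
    linarith
  obtain ⟨x₀, y₀, hxy0⟩ := hedge
  by_cases htri : ∃ a b c, G.Adj a b ∧ G.Adj b c ∧ G.Adj a c
  · obtain ⟨a, b, c, hab, hbc, hac⟩ := htri
    have hab' := hab.ne
    have hbc' := hbc.ne
    have hac' := hac.ne
    have key : ∀ x y, G.Adj x y → (x = a ∨ x = b ∨ x = c) := by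
      intro x y hxy
      by_contra hx
      push_neg at hx
      obtain ⟨hxa, hxb, hxc⟩ := hx
      have i1 := hint x y a b hxy hab
      have i2 := hint x y b c hxy hbc
      have i3 := hint x y a c hxy hac
      rcases i1 with h1 | h1 | h1 | h1
      · exact hxa h1
      · exact hxb h1
      · rcases i2 with h2 | h2 | h2 | h2
        · exact hxb h2
        · exact hxc h2
        · exact hab' (h1.symm.trans h2)
        · exact hac' (h1.symm.trans h2)
      · rcases i3 with h2 | h2 | h2 | h2
        · exact hxa h2
        · exact hxc h2
        · exact hab' (h2.symm.trans h1)
        · exact hbc' (h1.symm.trans h2)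
    exact ⟨a, b, c, hab', hac', hbc', fun x y hxy => ⟨key x y hxy, key y x hxy.symm⟩⟩
  · exfalso
    by_cases hX : ∀ z w, G.Adj z w → z = x₀ ∨ w = x₀
    · exact common_vertex_absurd x₀ hX hf₀ hxx
    push_neg at hX
    obtain ⟨z, w, hzw, hz, hw⟩ := hX
    have main : ∀ w', G.Adj y₀ w' → w' ≠ x₀ → False := by
      intro w' hy0w hwx
      apply common_vertex_absurd (G := G) y₀ ?_ hf₀ hxx
      intro p q hpq
      by_contra hc
      push_neg at hc
      obtain ⟨hp, hq⟩ := hc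
      have j1 := hint p q x₀ y₀ hpq hxy0
      have j2 := hint p q y₀ w' hpq hy0w
      rcases j1 with h1 | h1 | h1 | h1
      · rcases j2 with h2 | h2 | h2 | h2
        · exact hp h2
        · exact hwx (h2.symm.trans h1)
        · exact hq h2
        · exact htri ⟨x₀, y₀, w', hxy0, hy0w, by rw [← h1, ← h2]; exact hpq⟩
      · exact hp h1
      · rcases j2 with h2 | h2 | h2 | h2
        · exact hp h2
        · exact htri ⟨x₀, y₀, w', hxy0, hy0w, by rw [← h1, ← h2]; exact hpq.symm⟩
        · exact hq h2
        · exact hwx (h2.symm.trans h1)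
      · exact hq h1
    have jj := hint x₀ y₀ z w hxy0 hzw
    rcases jj with h1 | h1 | h1 | h1
    · exact hz h1.symm
    · exact hw h1.symm
    · rw [← h1] at hzw
      exact main w hzw hw
    · rw [← h1] at hzw
      exact main z hzw.symm hz


lemma compl_fracNu_eq (hn : 6 ≤ Fintype.card V) (a b c : V)
    (hab : a ≠ b) (hac : a ≠ c) (hbc : b ≠ c)
    (hstruct : ∀ x y, G.Adj x y → (x = a ∨ x = b ∨ x = c) ∧ (y = a ∨ y = b ∨ y = c)) :
    Gᶜ.fracNu = (Fintype.card V : ℝ) / 2 := by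
  classical
  set n := Fintype.card V with hndef
  set T : Finset V := {a, b, c} with hTdef
  have hmemT : ∀ x : V, x ∈ T ↔ (x = a ∨ x = b ∨ x = c) := by
    intro x; simp [hTdef]
  have hTcard : T.card = 3 := by
    rw [hTdef, Finset.card_insert_of_notMem (by simp [hab, hac]),
      Finset.card_insert_of_notMem (by simp [hbc]), Finset.card_singleton]
  have hnR : (6:ℝ) ≤ (n:ℝ) := by exact_mod_cast hn
  have h3ne : (n:ℝ) - 3 ≠ 0 := by linarith
  have h4ne : (n:ℝ) - 4 ≠ 0 := by linarith
  set α : ℝ := 1 / ((n:ℝ) - 3) with hαdef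
  set β : ℝ := ((n:ℝ) - 6) / (((n:ℝ) - 3) * ((n:ℝ) - 4)) with hβdef
  have hα0 : 0 ≤ α := by rw [hαdef]; exact div_nonneg zero_le_one (by linarith)
  have hα1 : α ≤ 1 := by
    rw [hαdef, div_le_one (by linarith)]; linarith
  have hβ0 : 0 ≤ β := by
    rw [hβdef]
    apply div_nonneg (by linarith)
    nlinarith
  have hβ1 : β ≤ 1 := by
    rw [hβdef, div_le_one (by nlinarith)]
    nlinarith
  set f : Sym2 V → ℝ := fun e =>
    if e.IsDiag then 0 else if (∀ x ∈ e, x ∈ T) then 0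
      else if (∃ x ∈ e, x ∈ T) then α else β with hfdef
  have fval : ∀ x y : V, x ≠ y → f s(x, y) =
      if (x ∈ T ∧ y ∈ T) then 0 else if (x ∈ T ∨ y ∈ T) then α else β := by
    intro x y hxy
    rw [hfdef]
    simp only [Sym2.isDiag_iff_proj_eq]
    rw [if_neg (by simpa using hxy)]
    have e1 : (∀ z ∈ s(x, y), z ∈ T) ↔ (x ∈ T ∧ y ∈ T) := Sym2.ball
    have e2 : (∃ z ∈ s(x, y), z ∈ T) ↔ (x ∈ T ∨ y ∈ T) := by
      constructor
      · rintro ⟨z, hz, hzT⟩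
        rcases Sym2.mem_iff.mp hz with rfl | rfl
        · exact Or.inl hzT
        · exact Or.inr hzT
      · rintro (hx | hy)
        · exact ⟨x, by simp, hx⟩
        · exact ⟨y, by simp, hy⟩
    rw [if_congr e1 rfl rfl, if_congr e2 rfl rfl]
  -- vertex weights are all 1
  have hvw : ∀ v : V, Gᶜ.vertexWeight f v = 1 := by
    intro v
    have hzero : ∀ w, w ≠ v → ¬ Gᶜ.Adj v w → f s(v, w) = 0 := by
      intro w hwv hnb
      rw [SimpleGraph.compl_adj] at hnb
      push_neg at hnb
      have hadj : G.Adj v w := hnb hwv.symm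
      obtain ⟨hv, hw'⟩ := hstruct v w hadj
      rw [fval v w hwv.symm, if_pos ⟨(hmemT v).mpr hv, (hmemT w).mpr hw'⟩]
    rw [SimpleGraph.vertexWeight, sum_incidence_erase Gᶜ f v hzero]
    · -- main computation over univ.erase v
      by_cases hv : v ∈ T
      · have hcong : ∀ w ∈ Finset.univ.erase v, f s(v, w) = if w ∈ T then 0 else α := by
          intro w hw
          have hwv : w ≠ v := (Finset.mem_erase.mp hw).1
          rw [fval v w hwv.symm]
          by_cases hwT : w ∈ T
          · simp [hv, hwT]
          · simp [hv, hwT]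
        rw [Finset.sum_congr rfl hcong, Finset.sum_ite, Finset.sum_const, Finset.sum_const]
        have hfilter : (Finset.univ.erase v).filter (fun w => ¬ w ∈ T) =
            Finset.univ \ T := by
          ext w
          constructor
          · intro hw
            exact Finset.mem_sdiff.mpr ⟨Finset.mem_univ w, (Finset.mem_filter.mp hw).2⟩
          · intro hw
            have hwT : w ∉ T := (Finset.mem_sdiff.mp hw).2
            refine Finset.mem_filter.mpr ⟨Finset.mem_erase.mpr ⟨?_, Finset.mem_univ w⟩, hwT⟩
            intro hh; subst hh; exact hwT hv
        rw [hfilter, Finset.card_sdiff_of_subset (Finset.subset_univ T), Finset.card_univ, hTcard]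
        have hcast : ((n - 3 : ℕ) : ℝ) = (n:ℝ) - 3 := by
          have : 3 ≤ n := by omega
          push_cast [this]; ring
        simp only [smul_zero, zero_add, nsmul_eq_mul, ← hndef]
        rw [hcast, hαdef]
        field_simp
      · have hcong : ∀ w ∈ Finset.univ.erase v, f s(v, w) = if w ∈ T then α else β := by
          intro w hw
          have hwv : w ≠ v := (Finset.mem_erase.mp hw).1
          rw [fval v w hwv.symm]
          by_cases hwT : w ∈ T
          · simp [hv, hwT]
          · simp [hv, hwT]
        rw [Finset.sum_congr rfl hcong, Finset.sum_ite, Finset.sum_const, Finset.sum_const]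
        have hf1 : (Finset.univ.erase v).filter (fun w => w ∈ T) = T := by
          ext w
          constructor
          · intro hw; exact (Finset.mem_filter.mp hw).2
          · intro hw
            refine Finset.mem_filter.mpr ⟨Finset.mem_erase.mpr ⟨?_, Finset.mem_univ w⟩, hw⟩
            intro hh; subst hh; exact hv hw
        have hctot := Finset.card_filter_add_card_filter_not
          (s := Finset.univ.erase v) (p := fun w => w ∈ T)
        rw [hf1, hTcard] at hctot
        have hce : (Finset.univ.erase v).card = n - 1 := by
          rw [Finset.card_erase_of_mem (Finset.mem_univ v), Finset.card_univ]
        rw [hce] at hctot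
        have hc2 : ((Finset.univ.erase v).filter (fun w => ¬ w ∈ T)).card = n - 4 := by omega
        rw [hf1, hc2]
        have hcast : ((n - 4 : ℕ) : ℝ) = (n:ℝ) - 4 := by
          have : 4 ≤ n := by omega
          push_cast [this]; ring
        simp only [nsmul_eq_mul, hTcard]
        rw [hcast, hαdef, hβdef]
        field_simp
        ring
  -- f is a fractional matching of Gᶜ
  have hmatch : Gᶜ.IsFracMatching f := by
    refine ⟨fun e => ?_, fun e he => ?_, fun v => ?_⟩
    · rw [hfdef]
      dsimp only
      split_ifs
      · exact ⟨le_rfl, zero_le_one⟩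
      · exact ⟨le_rfl, zero_le_one⟩
      · exact ⟨hα0, hα1⟩
      · exact ⟨hβ0, hβ1⟩
    · induction e with
      | _ x y =>
        by_cases hxy : x = y
        · subst hxy
          rw [hfdef]
          simp
        · rw [SimpleGraph.mem_edgeSet, SimpleGraph.compl_adj] at he
          push_neg at he
          have hadj : G.Adj x y := he hxy
          obtain ⟨hx, hy⟩ := hstruct x y hadj
          rw [fval x y hxy, if_pos ⟨(hmemT x).mpr hx, (hmemT y).mpr hy⟩]
    · exact le_of_eq (hvw v)
  -- total weight is n / 2
  have hW : Gᶜ.fracWeight f = (n:ℝ) / 2 := by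
    have h2 := sum_vertexWeight Gᶜ f
    have hsum1 : ∑ v : V, Gᶜ.vertexWeight f v = (n:ℝ) := by
      rw [Finset.sum_congr rfl (fun v _ => hvw v)]
      simp [hndef]
    rw [hsum1] at h2
    linarith
  refine le_antisymm (fracNu_le_half Gᶜ) ?_
  have := le_fracNu Gᶜ hmatch
  rw [hW] at this
  exact this

end FracAux
end

theorem stmt_10 {V : Type*} [Fintype V] (G : SimpleGraph V)
    (hn : 6 ≤ Fintype.card V) (h : G.fracNu = 3/2) :
    G.fracNu + Gᶜ.fracNu = ((Fintype.card V : ℝ) + 3) / 2 := by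
  obtain ⟨a, b, c, hab, hac, hbc, hstruct⟩ := FracAux.exists_triangle_struct h
  rw [h, FracAux.compl_fracNu_eq hn a b c hab hac hbc hstruct]
  ring
end
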